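/- arXiv:2310.12552 — 7 statements merged into one kernel-verified Lean document; each statement's English description precedes it below -/
import Mathlib

section
/- The (0,1)-relaxed strong chromatic index of C₇ equals 4. -/
open SimpleGraph

variable {V : Type*}

/-- The set of endvertices of edges in `M`. -/
def edgeVerts (M : Set (Sym2 V)) : Set V := {v | ∃ e ∈ M, v ∈ e}

/-- `M` is a semistrong matching of `G`: `M ⊆ E(G)` and each edge of `M` is incident with a
vertex of degree 1 in the subgraph of `G` induced by the endvertices of edges of `M`. -/
def IsSemistrongMatching (G : SimpleGraph V) (M : Set (Sym2 V)) : Prop :=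
  M ⊆ G.edgeSet ∧ ∀ e ∈ M, ∃ v ∈ e, ∃! u, u ∈ edgeVerts M ∧ G.Adj v u

/-- `M` is an induced (strong) matching of `G`: every vertex of the subgraph induced by the
endvertices of `M` has degree 1 in that subgraph. -/
def IsInducedMatching (G : SimpleGraph V) (M : Set (Sym2 V)) : Prop :=
  M ⊆ G.edgeSet ∧ ∀ v ∈ edgeVerts M, ∃! u, u ∈ edgeVerts M ∧ G.Adj v u

/-- Two edges are at distance 1 (adjacent): distinct and sharing a vertex. -/
def EdgeAdj (e f : Sym2 V) : Prop := e ≠ f ∧ ∃ v, v ∈ e ∧ v ∈ f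

/-- Two edges are at distance 2: distinct, nonadjacent, both adjacent to a common edge of `G`. -/
def EdgeDist2 (G : SimpleGraph V) (e f : Sym2 V) : Prop :=
  e ≠ f ∧ ¬ EdgeAdj e f ∧ ∃ g ∈ G.edgeSet, EdgeAdj e g ∧ EdgeAdj f g

/-- A semistrong edge coloring: each color class is a semistrong matching. -/
def IsSemistrongColoring (G : SimpleGraph V) {k : ℕ} (c : Sym2 V → Fin k) : Prop :=
  ∀ i, IsSemistrongMatching G {e | e ∈ G.edgeSet ∧ c e = i}

/-- A strong edge coloring: each color class is an induced matching. -/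
def IsStrongColoring (G : SimpleGraph V) {k : ℕ} (c : Sym2 V → Fin k) : Prop :=
  ∀ i, IsInducedMatching G {e | e ∈ G.edgeSet ∧ c e = i}

/-- A (0,1)-relaxed strong edge coloring: no edge has a same-colored adjacent edge,
and each edge has at most one same-colored edge at distance 2. -/
def IsRelaxedColoring (G : SimpleGraph V) {k : ℕ} (c : Sym2 V → Fin k) : Prop :=
  (∀ e ∈ G.edgeSet, ∀ f ∈ G.edgeSet, EdgeAdj e f → c e ≠ c f) ∧
  (∀ e ∈ G.edgeSet, {f | f ∈ G.edgeSet ∧ EdgeDist2 G e f ∧ c f = c e}.Subsingleton)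

/-- The semistrong chromatic index. -/
noncomputable def ssIndex (G : SimpleGraph V) : ℕ :=
  sInf {k | ∃ c : Sym2 V → Fin k, IsSemistrongColoring G c}

/-- The strong chromatic index. -/
noncomputable def strongIndex (G : SimpleGraph V) : ℕ :=
  sInf {k | ∃ c : Sym2 V → Fin k, IsStrongColoring G c}

/-- The (0,1)-relaxed strong chromatic index. -/
noncomputable def relIndex (G : SimpleGraph V) : ℕ :=
  sInf {k | ∃ c : Sym2 V → Fin k, IsRelaxedColoring G c}


section Aux

instance (e f : Sym2 (Fin 7)) : Decidable (EdgeAdj e f) := by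
  unfold EdgeAdj; infer_instance

instance (e f : Sym2 (Fin 7)) : Decidable (EdgeDist2 (cycleGraph 7) e f) := by
  unfold EdgeDist2; infer_instance

/-- The edges of `C₇`. -/
private def Ed (i : Fin 7) : Sym2 (Fin 7) := s(i, i + 1)

set_option maxRecDepth 8000 in
private lemma L1 : ∀ i : Fin 7, Ed i ∈ (cycleGraph 7).edgeSet := by decide

set_option maxRecDepth 8000 in
private lemma L2 : ∀ i : Fin 7, EdgeAdj (Ed i) (Ed (i + 1)) := by decide

set_option maxRecDepth 8000 in
private lemma L3 : ∀ i : Fin 7, EdgeDist2 (cycleGraph 7) (Ed i) (Ed (i + 2)) := by decide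

set_option maxRecDepth 8000 in
private lemma L4 : ∀ i : Fin 7, EdgeDist2 (cycleGraph 7) (Ed i) (Ed (i + 5)) := by decide

set_option maxRecDepth 8000 in
private lemma L5 : ∀ i : Fin 7, Ed (i + 2) ≠ Ed (i + 5) := by decide

set_option maxRecDepth 8000 in
private lemma no3' : ∀ a0 a1 a2 a3 a4 a5 a6 : Fin 3,
    ¬ (a0 ≠ a1 ∧ a1 ≠ a2 ∧ a2 ≠ a3 ∧ a3 ≠ a4 ∧ a4 ≠ a5 ∧ a5 ≠ a6 ∧ a6 ≠ a0 ∧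
       ¬(a2 = a0 ∧ a5 = a0) ∧ ¬(a3 = a1 ∧ a6 = a1) ∧ ¬(a4 = a2 ∧ a0 = a2) ∧
       ¬(a5 = a3 ∧ a1 = a3) ∧ ¬(a6 = a4 ∧ a2 = a4) ∧ ¬(a0 = a5 ∧ a3 = a5) ∧
       ¬(a1 = a6 ∧ a4 = a6)) := by decide

/-- An injective recoloring preserves relaxedness. -/
private lemma relaxed_comp {G : SimpleGraph V} {k m : ℕ} {c : Sym2 V → Fin k}
    {ι : Fin k → Fin m} (hι : Function.Injective ι) (h : IsRelaxedColoring G c) :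
    IsRelaxedColoring G (ι ∘ c) :=
  ⟨fun e he f hf hadj hc => h.1 e he f hf hadj (hι hc),
    fun e he x hx y hy => h.2 e he ⟨hx.1, hx.2.1, hι hx.2.2⟩ ⟨hy.1, hy.2.1, hι hy.2.2⟩⟩

/-- The explicit 4-coloring of `C₇`. -/
private def c4 (e : Sym2 (Fin 7)) : Fin 4 :=
  if e = Ed 0 then 0 else if e = Ed 1 then 1 else if e = Ed 2 then 2 else
  if e = Ed 3 then 0 else if e = Ed 4 then 1 else if e = Ed 5 then 2 else 3

set_option maxRecDepth 8000 in
private lemma c4_part1 : ∀ e ∈ (cycleGraph 7).edgeSet, ∀ f ∈ (cycleGraph 7).edgeSet,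
    EdgeAdj e f → c4 e ≠ c4 f := by decide

set_option maxRecDepth 8000 in
private lemma c4_empty : ∀ e ∈ (cycleGraph 7).edgeSet, ∀ f,
    ¬ (f ∈ (cycleGraph 7).edgeSet ∧ EdgeDist2 (cycleGraph 7) e f ∧ c4 f = c4 e) := by decide

private lemma c4_relaxed : IsRelaxedColoring (cycleGraph 7) c4 :=
  ⟨c4_part1, fun e he x hx _ _ => absurd hx (c4_empty e he x)⟩

private lemma no_relaxed_3 (c : Sym2 (Fin 7) → Fin 3) :
    ¬ IsRelaxedColoring (cycleGraph 7) c := by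
  intro h
  have h1 : ∀ i : Fin 7, c (Ed i) ≠ c (Ed (i + 1)) :=
    fun i => h.1 _ (L1 i) _ (L1 (i + 1)) (L2 i)
  have h2 : ∀ i : Fin 7, ¬(c (Ed (i + 2)) = c (Ed i) ∧ c (Ed (i + 5)) = c (Ed i)) := by
    rintro i ⟨ha, hb⟩
    exact L5 i (h.2 (Ed i) (L1 i) ⟨L1 (i + 2), L3 i, ha⟩ ⟨L1 (i + 5), L4 i, hb⟩)
  exact no3' (c (Ed 0)) (c (Ed 1)) (c (Ed 2)) (c (Ed 3)) (c (Ed 4)) (c (Ed 5)) (c (Ed 6))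
    ⟨h1 0, h1 1, h1 2, h1 3, h1 4, h1 5, h1 6, h2 0, h2 1, h2 2, h2 3, h2 4, h2 5, h2 6⟩

end Aux

/-- The (0,1)-relaxed strong chromatic index of `C₇` equals 4. -/
theorem relIndex_C7 : relIndex (cycleGraph 7) = 4 := by
  have h4 : 4 ∈ {k | ∃ c : Sym2 (Fin 7) → Fin k, IsRelaxedColoring (cycleGraph 7) c} :=
    ⟨c4, c4_relaxed⟩
  refine le_antisymm (Nat.sInf_le h4) (le_csInf ⟨4, h4⟩ ?_)
  rintro k ⟨c, hc⟩
  by_contra hk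
  have hk3 : k ≤ 3 := by omega
  exact no_relaxed_3 (Fin.castLE hk3 ∘ c) (relaxed_comp (Fin.castLE_injective hk3) hc)
end

section
/- If G is a cycle Cₙ with n ≥ 3 and n ∉ {4,7}, then χ'_ss(G) ≤ 3 and χ'_{(0,1)}(G) ≤ 3. -/
open SimpleGraph

variable {V : Type*}

set_option maxHeartbeats 1600000


/-- color of edge i in cycle of length n -/
def fcol (n i : ℕ) : ℕ :=
  if n % 3 = 1 ∧ n ≤ i + 4 then
    (if n = i + 4 then 1 else if n = i + 3 then 0 else if n = i + 2 then 2 else 1)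
  else i % 3

lemma fcol_lt (n i : ℕ) : fcol n i < 3 := by
  unfold fcol; split_ifs <;> omega

lemma fcolA (n i : ℕ) (h3 : 3 ≤ n) (h4 : n ≠ 4) (h7 : n ≠ 7) (hi : i < n) :
    fcol n i ≠ fcol n ((i + 1) % n) := by
  obtain ⟨a, ha, haa, ha2⟩ : ∃ a, (i + 1) % n = a ∧ a < n ∧ (a = i + 1 ∨ a + n = i + 1) := by
    refine ⟨_, rfl, Nat.mod_lt _ (by omega), ?_⟩
    rcases Nat.lt_or_ge (i + 1) n with h | h
    · exact Or.inl (Nat.mod_eq_of_lt h)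
    · right
      rw [Nat.mod_eq_sub_mod h, Nat.mod_eq_of_lt (by omega)]; omega
  rw [ha]; unfold fcol; split_ifs <;> omega

lemma fcolB (n i : ℕ) (h3 : 3 ≤ n) (h4 : n ≠ 4) (h7 : n ≠ 7) (hi : i < n) :
    ¬(fcol n i = fcol n ((i + 2) % n) ∧ fcol n ((i + 2) % n) = fcol n ((i + 4) % n)) := by
  rcases eq_or_ne n 3 with rfl | hn3
  · interval_cases i <;> decide
  have h5 : 5 ≤ n := by omega
  obtain ⟨a, ha, haa, ha2⟩ : ∃ a, (i + 2) % n = a ∧ a < n ∧ (a = i + 2 ∨ a + n = i + 2) := by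
    refine ⟨_, rfl, Nat.mod_lt _ (by omega), ?_⟩
    rcases Nat.lt_or_ge (i + 2) n with h | h
    · exact Or.inl (Nat.mod_eq_of_lt h)
    · right; rw [Nat.mod_eq_sub_mod h, Nat.mod_eq_of_lt (by omega)]; omega
  obtain ⟨b, hb, hbb, hb2⟩ : ∃ b, (i + 4) % n = b ∧ b < n ∧ (b = i + 4 ∨ b + n = i + 4) := by
    refine ⟨_, rfl, Nat.mod_lt _ (by omega), ?_⟩
    rcases Nat.lt_or_ge (i + 4) n with h | h
    · exact Or.inl (Nat.mod_eq_of_lt h)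
    · right; rw [Nat.mod_eq_sub_mod h, Nat.mod_eq_of_lt (by omega)]; omega
  rw [ha, hb]; unfold fcol; split_ifs <;> first | omega | tauto

def F3 (n : ℕ) (u : Fin n) : Fin 3 := ⟨fcol n u.val, fcol_lt n u.val⟩

section
variable {m : ℕ}

lemma val_add_one (u : Fin (m + 3)) : (u + 1).val = (u.val + 1) % (m + 3) := by
  rw [Fin.val_add]; rfl

lemma F3_A (h4 : m + 3 ≠ 4) (h7 : m + 3 ≠ 7) (u : Fin (m + 3)) :
    F3 (m + 3) u ≠ F3 (m + 3) (u + 1) := by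
  intro h
  have := congrArg Fin.val h
  simp only [F3, val_add_one] at this
  exact fcolA (m + 3) u.val (by omega) h4 h7 u.isLt this

lemma F3_B (h4 : m + 3 ≠ 4) (h7 : m + 3 ≠ 7) (u : Fin (m + 3)) :
    ¬(F3 (m+3) u = F3 (m+3) (u+1+1) ∧ F3 (m+3) (u+1+1) = F3 (m+3) (u+1+1+1+1)) := by
  have step : ∀ (v : Fin (m + 3)) (a : ℕ), v.val = a % (m + 3) →
      (v + 1).val = (a + 1) % (m + 3) := by
    intro v a h; rw [val_add_one, h, Nat.mod_add_mod]
  have e0 : u.val = u.val % (m + 3) := (Nat.mod_eq_of_lt u.isLt).symm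
  have e1 := step u u.val e0
  have e2 := step (u + 1) _ e1
  have e3 := step (u + 1 + 1) _ e2
  have e4 := step (u + 1 + 1 + 1) _ e3
  intro ⟨h1, h2⟩
  have c1 := congrArg Fin.val h1
  have c2 := congrArg Fin.val h2
  simp only [F3, e2, e4] at c1 c2
  exact fcolB (m + 3) u.val (by omega) h4 h7 u.isLt ⟨c1, c2⟩

lemma self_ne_add_one (u : Fin (m + 3)) : u ≠ u + 1 := by
  intro h
  have := congrArg Fin.val h
  rw [val_add_one] at this
  rcases Nat.lt_or_ge (u.val + 1) (m + 3) with h1 | h1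
  · rw [Nat.mod_eq_of_lt h1] at this; omega
  · rw [Nat.mod_eq_sub_mod h1, Nat.mod_eq_of_lt (by omega)] at this
    have := u.isLt; omega

lemma self_ne_add_two (u : Fin (m + 3)) : u ≠ u + 1 + 1 := by
  intro h
  have := congrArg Fin.val h
  rw [val_add_one, val_add_one, Nat.mod_add_mod] at this
  rcases Nat.lt_or_ge (u.val + 2) (m + 3) with h1 | h1
  · rw [Nat.mod_eq_of_lt h1] at this; omega
  · rw [Nat.mod_eq_sub_mod h1, Nat.mod_eq_of_lt (by omega)] at this
    have := u.isLt; omega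

lemma edge_eq_iff {u v : Fin (m + 3)} : s(u, u + 1) = s(v, v + 1) ↔ u = v := by
  rw [Sym2.eq_iff]
  constructor
  · rintro (⟨h, -⟩ | ⟨h1, h2⟩)
    · exact h
    · exact absurd (by rw [← h1, h2] : v = v + 1 + 1) (self_ne_add_two v)
  · rintro rfl; exact Or.inl ⟨rfl, rfl⟩

lemma cadj_iff {u v : Fin (m + 3)} :
    (cycleGraph (m + 3)).Adj u v ↔ v = u + 1 ∨ u = v + 1 := by
  have : (cycleGraph (m + 3)).Adj u v ↔ u - v = 1 ∨ v - u = 1 := cycleGraph_adj (n := m + 1)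
  rw [this, sub_eq_iff_eq_add, sub_eq_iff_eq_add, add_comm (1 : Fin (m+3)) v,
    add_comm (1 : Fin (m+3)) u, or_comm]

end

section
variable {m : ℕ}

def ccol (m : ℕ) : Sym2 (Fin (m + 3)) → Fin 3 :=
  Sym2.lift ⟨fun a b => if b = a + 1 then F3 (m+3) a else if a = b + 1 then F3 (m+3) b else 0, by
    intro a b
    dsimp only
    by_cases h1 : b = a + 1
    · by_cases h2 : a = b + 1
      · exact absurd (h2.trans (by rw [h1])) (self_ne_add_two a)
      · rw [if_pos h1, if_neg h2, if_pos h1]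
    · by_cases h2 : a = b + 1
      · rw [if_neg h1, if_pos h2, if_pos h2]
      · rw [if_neg h1, if_neg h2, if_neg h2, if_neg h1]⟩

lemma ccol_edge (u : Fin (m + 3)) : ccol m s(u, u + 1) = F3 (m + 3) u := by
  show (if u + 1 = u + 1 then _ else _) = _
  rw [if_pos rfl]

lemma edge_mem (u : Fin (m + 3)) : s(u, u + 1) ∈ (cycleGraph (m + 3)).edgeSet :=
  (mem_edgeSet _).mpr (cadj_iff.mpr (Or.inl rfl))

lemma mem_edge_iff {e : Sym2 (Fin (m + 3))} :
    e ∈ (cycleGraph (m + 3)).edgeSet ↔ ∃ u, e = s(u, u + 1) := by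
  constructor
  · induction e using Sym2.ind with
    | _ a b =>
      intro h
      rcases cadj_iff.mp ((mem_edgeSet _).mp h) with h1 | h1
      · exact ⟨a, by rw [h1]⟩
      · exact ⟨b, by rw [h1, Sym2.eq_swap]⟩
  · rintro ⟨u, rfl⟩; exact edge_mem u

lemma edgeAdj_iff {u v : Fin (m + 3)} :
    EdgeAdj s(u, u + 1) s(v, v + 1) ↔ v = u + 1 ∨ u = v + 1 := by
  constructor
  · rintro ⟨hne, x, hxe, hxf⟩
    rw [Sym2.mem_iff] at hxe hxf
    rcases hxe with rfl | rfl
    · rcases hxf with rfl | h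
      · exact absurd (edge_eq_iff.mpr rfl) hne
      · exact Or.inr h
    · rcases hxf with h | h
      · exact Or.inl h.symm
      · exact absurd (edge_eq_iff.mpr (add_right_cancel h)) hne
  · rintro (rfl | h)
    · exact ⟨fun hq => self_ne_add_one u (edge_eq_iff.mp hq),
        u + 1, Sym2.mem_mk_right u (u + 1), Sym2.mem_mk_left (u + 1) (u + 1 + 1)⟩
    · refine ⟨fun hq => self_ne_add_one v ((edge_eq_iff.mp hq).symm.trans h),
        v + 1, ?_, Sym2.mem_mk_right v (v + 1)⟩
      rw [← h]; exact Sym2.mem_mk_left u (u + 1)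

end

section
variable {m : ℕ}

lemma ccol_semistrong (h4 : m + 3 ≠ 4) (h7 : m + 3 ≠ 7) :
    IsSemistrongColoring (cycleGraph (m + 3)) (ccol m) := by
  intro i
  refine ⟨fun e he => he.1, ?_⟩
  rintro e ⟨he, hce⟩
  obtain ⟨u, rfl⟩ := mem_edge_iff.mp he
  have hwu : (u - 1 - 1) + 1 + 1 = u := by rw [sub_add_cancel, sub_add_cancel]
  have hB := F3_B h4 h7 (u - 1 - 1)
  rw [hwu] at hB
  rw [not_and_or] at hB
  rcases hB with hB | hB
  · -- F3 (u-1-1) ≠ F3 u : left endvertex u has unique neighbor u+1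
    refine ⟨u, Sym2.mem_mk_left u (u + 1), u + 1,
      ⟨⟨s(u, u + 1), ⟨he, hce⟩, Sym2.mem_mk_right u (u + 1)⟩, cadj_iff.mpr (Or.inl rfl)⟩, ?_⟩
    rintro x ⟨⟨e', ⟨he', hce'⟩, hxe'⟩, hadj⟩
    obtain ⟨w', rfl⟩ := mem_edge_iff.mp he'
    have hcw : F3 (m+3) w' = F3 (m+3) u := by rw [← ccol_edge, ← ccol_edge, hce', hce]
    rcases cadj_iff.mp hadj with h | h
    · exact h
    · exfalso
      rw [Sym2.mem_iff] at hxe'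
      rcases hxe' with h1 | h1
      · apply F3_A h4 h7 w'
        rw [hcw]; rw [h1] at h; rw [h]
      · apply hB
        have h2 : u = w' + 1 + 1 := by rw [h, h1]
        have h3 : w' = u - 1 - 1 := by
          apply add_right_cancel (b := (1 : Fin (m+3)))
          apply add_right_cancel (b := (1 : Fin (m+3)))
          rw [hwu, ← h2]
        rw [← h3]; exact hcw
  · -- F3 u ≠ F3 (u+1+1) : right endvertex u+1 has unique neighbor u
    refine ⟨u + 1, Sym2.mem_mk_right u (u + 1), u,
      ⟨⟨s(u, u + 1), ⟨he, hce⟩, Sym2.mem_mk_left u (u + 1)⟩, cadj_iff.mpr (Or.inr rfl)⟩, ?_⟩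
    rintro x ⟨⟨e', ⟨he', hce'⟩, hxe'⟩, hadj⟩
    obtain ⟨w', rfl⟩ := mem_edge_iff.mp he'
    have hcw : F3 (m+3) w' = F3 (m+3) u := by rw [← ccol_edge, ← ccol_edge, hce', hce]
    rcases cadj_iff.mp hadj with h | h
    · exfalso
      rw [Sym2.mem_iff] at hxe'
      rcases hxe' with h1 | h1
      · apply hB
        rw [← hcw, ← h1, h]
      · have h2 : w' = u + 1 := by
          apply add_right_cancel (b := (1 : Fin (m+3)))
          rw [← h1, h]
        apply F3_A h4 h7 u
        rw [← h2]; exact hcw.symm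
    · exact add_right_cancel h.symm

end

section
variable {m : ℕ}

lemma ccol_relaxed (h4 : m + 3 ≠ 4) (h7 : m + 3 ≠ 7) :
    IsRelaxedColoring (cycleGraph (m + 3)) (ccol m) := by
  constructor
  · intro e he f hf hadj
    obtain ⟨u, rfl⟩ := mem_edge_iff.mp he
    obtain ⟨v, rfl⟩ := mem_edge_iff.mp hf
    rw [ccol_edge, ccol_edge]
    rcases edgeAdj_iff.mp hadj with h | h
    · rw [h]; exact F3_A h4 h7 u
    · rw [h]; exact (F3_A h4 h7 v).symm
  · intro e he
    obtain ⟨u, rfl⟩ := mem_edge_iff.mp he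
    have key : ∀ f, f ∈ (cycleGraph (m + 3)).edgeSet →
        EdgeDist2 (cycleGraph (m + 3)) s(u, u + 1) f → ccol m f = ccol m s(u, u + 1) →
        ∃ v, f = s(v, v + 1) ∧ F3 (m + 3) v = F3 (m + 3) u ∧ (v = u + 1 + 1 ∨ v + 1 + 1 = u) := by
      intro f hf hd2 hcf
      obtain ⟨v, rfl⟩ := mem_edge_iff.mp hf
      rw [ccol_edge, ccol_edge] at hcf
      obtain ⟨hne, hnadj, g, hg, ha1, ha2⟩ := hd2
      obtain ⟨w, rfl⟩ := mem_edge_iff.mp hg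
      refine ⟨v, rfl, hcf, ?_⟩
      rcases edgeAdj_iff.mp ha1 with h1 | h1 <;> rcases edgeAdj_iff.mp ha2 with h2 | h2
      · -- w = u+1, w = v+1 → u = v
        exact absurd (edge_eq_iff.mpr (add_right_cancel (h1.symm.trans h2))) hne
      · -- w = u+1, v = w+1
        left; rw [h2, h1]
      · -- u = w+1, w = v+1 → u = v+1+1
        right
        have : u = v + 1 + 1 := by rw [h1, h2]
        rw [this]
      · -- u = w+1, v = w+1 → u = v
        exact absurd (edge_eq_iff.mpr (h1.trans h2.symm)) hne
    rintro f1 ⟨hf1, hd1, hc1⟩ f2 ⟨hf2, hd2, hc2⟩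
    obtain ⟨v1, rfl, hcv1, hp1⟩ := key f1 hf1 hd1 hc1
    obtain ⟨v2, rfl, hcv2, hp2⟩ := key f2 hf2 hd2 hc2
    rcases hp1 with h1 | h1 <;> rcases hp2 with h2 | h2
    · rw [h1, h2]
    · exfalso
      apply F3_B h4 h7 v2
      constructor
      · rw [h2]; exact hcv2
      · have h5 : v2 + 1 + 1 + 1 + 1 = v1 := by rw [h2, h1]
        rw [h5, h2]; exact hcv1.symm
    · exfalso
      apply F3_B h4 h7 v1
      constructor
      · rw [h1]; exact hcv1
      · have h5 : v1 + 1 + 1 + 1 + 1 = v2 := by rw [h1, h2]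
        rw [h5, h1]; exact hcv2.symm
    · rw [add_right_cancel (add_right_cancel (h1.trans h2.symm))]

end

/-- For the cycle `Cₙ` with `n ≥ 3`, `n ∉ {4,7}`, we have `χ'_ss(Cₙ) ≤ 3` and `χ'_{(0,1)}(Cₙ) ≤ 3`. -/
theorem cycle_semistrong_three (n : ℕ) (hn : 3 ≤ n) (h4 : n ≠ 4) (h7 : n ≠ 7) :
    ssIndex (cycleGraph n) ≤ 3 ∧ relIndex (cycleGraph n) ≤ 3 := by
  obtain ⟨m, rfl⟩ : ∃ m, n = m + 3 := ⟨n - 3, by omega⟩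
  exact ⟨Nat.sInf_le ⟨ccol m, ccol_semistrong h4 h7⟩,
    Nat.sInf_le ⟨ccol m, ccol_relaxed h4 h7⟩⟩
end

section
/- The (0,1)-relaxed strong chromatic index of K_{Δ,Δ} equals ⌈Δ²/2⌉. -/
open SimpleGraph

variable {V : Type*}

namespace RelAux


lemma divmod_r {Δ : ℕ} (hΔ : 0 < Δ) (q r : ℕ) (hr : r < Δ) : (q * Δ + r) % Δ = r := by
  rw [add_comm, Nat.add_mul_mod_self_right, Nat.mod_eq_of_lt hr]

lemma divmod_q {Δ : ℕ} (hΔ : 0 < Δ) (q r : ℕ) (hr : r < Δ) : (q * Δ + r) / Δ = q := by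
  rw [add_comm, Nat.add_mul_div_right _ _ hΔ, Nat.div_eq_of_lt hr, zero_add]

lemma shift_inj {Δ a b b' : ℕ} (ha : a ≤ Δ) (hb : b < Δ) (hb' : b' < Δ)
    (h : (Δ + b - a) % Δ = (Δ + b' - a) % Δ) : b = b' := by
  rcases le_total b b' with hle | hle
  · have hd := (Nat.modEq_iff_dvd' (by omega)).1 h
    have he : (Δ + b' - a) - (Δ + b - a) = b' - b := by omega
    rw [he] at hd
    have := Nat.eq_zero_of_dvd_of_lt hd (by omega)
    omega
  · have hd := (Nat.modEq_iff_dvd' (by omega)).1 h.symm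
    have he : (Δ + b - a) - (Δ + b' - a) = b - b' := by omega
    rw [he] at hd
    have := Nat.eq_zero_of_dvd_of_lt hd (by omega)
    omega

def T (Δ : ℕ) (x : Fin Δ × Fin Δ) : ℕ :=
  ((Δ + x.2.val - x.1.val) % Δ) * Δ + x.1.val

lemma T_lt {Δ : ℕ} (hΔ : 1 ≤ Δ) (x : Fin Δ × Fin Δ) : T Δ x < Δ * Δ := by
  have h1 : (Δ + x.2.val - x.1.val) % Δ < Δ := Nat.mod_lt _ hΔ
  have h2 : x.1.val < Δ := x.1.isLt
  have h3 : ((Δ + x.2.val - x.1.val) % Δ + 1) * Δ ≤ Δ * Δ :=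
    Nat.mul_le_mul_right _ (by omega)
  have h4 : ((Δ + x.2.val - x.1.val) % Δ + 1) * Δ
      = ((Δ + x.2.val - x.1.val) % Δ) * Δ + Δ := by ring
  unfold T
  omega

lemma T_inj {Δ : ℕ} (hΔ : 1 ≤ Δ) {x y : Fin Δ × Fin Δ} (h : T Δ x = T Δ y) : x = y := by
  obtain ⟨a, b⟩ := x
  obtain ⟨a', b'⟩ := y
  unfold T at h
  simp only at h
  have ha : a.val = a'.val := by
    have h1 := congrArg (· % Δ) h
    simpa [divmod_r hΔ _ _ a.isLt, divmod_r hΔ _ _ a'.isLt] using h1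
  have hq : (Δ + b.val - a.val) % Δ = (Δ + b'.val - a'.val) % Δ := by
    have h1 := congrArg (· / Δ) h
    simpa [divmod_q hΔ _ _ a.isLt, divmod_q hΔ _ _ a'.isLt] using h1
  rw [← ha] at hq
  have hb : b.val = b'.val := shift_inj (le_of_lt a.isLt) b.isLt b'.isLt hq
  simp [Prod.ext_iff, Fin.ext_iff, ha, hb]

lemma T_step {Δ : ℕ} (hΔ : 1 ≤ Δ) {x y : Fin Δ × Fin Δ} (h : T Δ y = T Δ x + 1)
    (h2 : 2 ∣ T Δ x) : x.1 ≠ y.1 ∧ x.2 ≠ y.2 := by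
  obtain ⟨a, b⟩ := x
  obtain ⟨a', b'⟩ := y
  unfold T at h h2
  simp only at h h2 ⊢
  set q := (Δ + b.val - a.val) % Δ with hqdef
  set q' := (Δ + b'.val - a'.val) % Δ with hq'def
  have hqΔ : q < Δ := Nat.mod_lt _ hΔ
  have hq'Δ : q' < Δ := Nat.mod_lt _ hΔ
  by_cases hc : a.val + 1 < Δ
  · have ha' : a'.val = a.val + 1 := by
      have h1 := congrArg (· % Δ) h
      have e : (q * Δ + a.val + 1) = q * Δ + (a.val + 1) := by omega
      rw [e] at h1
      simpa [divmod_r hΔ _ _ a'.isLt, divmod_r hΔ _ _ hc] using h1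
    have hqq : q' = q := by
      have h1 := congrArg (· / Δ) h
      have e : (q * Δ + a.val + 1) = q * Δ + (a.val + 1) := by omega
      rw [e] at h1
      simpa [divmod_q hΔ _ _ a'.isLt, divmod_q hΔ _ _ hc] using h1
    constructor
    · intro hcon
      have := congrArg Fin.val hcon
      omega
    · intro hcon
      have hb : b.val = b'.val := congrArg Fin.val hcon
      have h1 : (Δ + b.val - (a.val + 1)) % Δ = (Δ + b.val - a.val) % Δ := by
        have e0 : (Δ + b.val - (a.val + 1)) % Δ = q' := by rw [hq'def, ha', hb]
        rw [e0, hqq]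
      have hd := (Nat.modEq_iff_dvd' (by omega)).1 h1
      have he : (Δ + b.val - a.val) - (Δ + b.val - (a.val + 1)) = 1 := by omega
      rw [he] at hd
      have := Nat.le_of_dvd one_pos hd
      omega
  · have haa : a.val = Δ - 1 := by have := a.isLt; omega
    have hΔ1 : Δ ≠ 1 := by
      intro h1
      subst h1
      have := a.isLt; have := a'.isLt
      omega
    have hodd : ¬ 2 ∣ Δ := by
      intro h2d
      have hm : 2 ∣ q * Δ := Dvd.dvd.mul_left h2d q
      omega
    have hΔ3 : 3 ≤ Δ := by omega
    have e : q * Δ + a.val + 1 = (q + 1) * Δ := by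
      have : q * Δ + Δ = (q + 1) * Δ := by ring
      omega
    have hT2 : q' * Δ + a'.val = (q + 1) * Δ + 0 := by omega
    have ha0 : a'.val = 0 := by
      have h1 := congrArg (· % Δ) hT2
      simpa only [divmod_r hΔ _ _ a'.isLt, divmod_r hΔ _ _ hΔ] using h1
    have hqs : q' = q + 1 := by
      have h1 := congrArg (· / Δ) hT2
      simpa only [divmod_q hΔ _ _ a'.isLt, divmod_q hΔ _ _ hΔ] using h1
    constructor
    · intro hcon
      have := congrArg Fin.val hcon
      omega
    · intro hcon
      have hb : b.val = b'.val := congrArg Fin.val hcon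
      have e1 : q = (b.val + 1) % Δ := by
        rw [hqdef]
        congr 1
        omega
      have e2 : q' = b'.val := by
        rw [hq'def, ha0, Nat.sub_zero, Nat.add_mod_left, Nat.mod_eq_of_lt b'.isLt]
      rcases Nat.lt_or_ge (b.val + 1) Δ with hlt | hge
      · rw [Nat.mod_eq_of_lt hlt] at e1
        omega
      · have hbe : b.val + 1 = Δ := by have := b.isLt; omega
        rw [hbe, Nat.mod_self] at e1
        omega



variable {Δ : ℕ}

def emap (x : Fin Δ × Fin Δ) : Sym2 (Fin Δ ⊕ Fin Δ) := s(Sum.inl x.1, Sum.inr x.2)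

lemma emap_mem (x : Fin Δ × Fin Δ) :
    emap x ∈ (completeBipartiteGraph (Fin Δ) (Fin Δ)).edgeSet := by
  simp [emap, completeBipartiteGraph]

lemma emap_inj {x y : Fin Δ × Fin Δ} (h : emap x = emap y) : x = y := by
  simp only [emap, Sym2.eq, Sym2.rel_iff', Prod.mk.injEq, Prod.swap_prod_mk] at h
  rcases h with ⟨h1, h2⟩ | ⟨h1, h2⟩
  · exact Prod.ext (Sum.inl.inj h1) (Sum.inr.inj h2)
  · exact absurd h1 (by simp)

lemma mem_iff {e : Sym2 (Fin Δ ⊕ Fin Δ)}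
    (he : e ∈ (completeBipartiteGraph (Fin Δ) (Fin Δ)).edgeSet) : ∃ x, emap x = e := by
  induction e using Sym2.ind with
  | _ u v =>
    rw [SimpleGraph.mem_edgeSet] at he
    rcases u with a | a <;> rcases v with b | b
    · simp [completeBipartiteGraph] at he
    · exact ⟨(a, b), rfl⟩
    · exact ⟨(b, a), Sym2.eq_swap⟩
    · simp [completeBipartiteGraph] at he

lemma edgeAdj_iff {x y : Fin Δ × Fin Δ} :
    EdgeAdj (emap x) (emap y) ↔ x ≠ y ∧ (x.1 = y.1 ∨ x.2 = y.2) := by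
  constructor
  · rintro ⟨hne, v, hv1, hv2⟩
    refine ⟨fun h => hne (by rw [h]), ?_⟩
    rw [emap, Sym2.mem_iff] at hv1 hv2
    rcases hv1 with h1 | h1 <;> rcases hv2 with h2 | h2 <;> subst h1
    · exact Or.inl (Sum.inl.inj h2)
    · exact absurd h2 (by simp)
    · exact absurd h2 (by simp)
    · exact Or.inr (Sum.inr.inj h2)
  · rintro ⟨hne, h | h⟩
    · exact ⟨fun hc => hne (emap_inj hc), Sum.inl x.1, by simp [emap], by simp [emap, h]⟩
    · exact ⟨fun hc => hne (emap_inj hc), Sum.inr x.2, by simp [emap], by simp [emap, h]⟩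

lemma adj_or_dist2 {x y : Fin Δ × Fin Δ} (hne : x ≠ y) :
    EdgeAdj (emap x) (emap y) ∨
      EdgeDist2 (completeBipartiteGraph (Fin Δ) (Fin Δ)) (emap x) (emap y) := by
  by_cases hs : x.1 = y.1 ∨ x.2 = y.2
  · exact Or.inl (edgeAdj_iff.2 ⟨hne, hs⟩)
  · push_neg at hs
    refine Or.inr ⟨fun hc => hne (emap_inj hc), fun hadj => ?_, emap (x.1, y.2),
      emap_mem _, ?_, ?_⟩
    · rcases (edgeAdj_iff.1 hadj).2 with h | h
      · exact hs.1 h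
      · exact hs.2 h
    · refine edgeAdj_iff.2 ⟨?_, Or.inl rfl⟩
      intro hc
      exact hs.2 (by rw [hc])
    · refine edgeAdj_iff.2 ⟨?_, Or.inr rfl⟩
      intro hc
      exact hs.1 (by rw [hc])


lemma upper {Δ : ℕ} (hΔ : 1 ≤ Δ) :
    ∃ c : Sym2 (Fin Δ ⊕ Fin Δ) → Fin ((Δ * Δ + 1) / 2),
      IsRelaxedColoring (completeBipartiteGraph (Fin Δ) (Fin Δ)) c := by
  classical
  have hK : 0 < (Δ * Δ + 1) / 2 := by
    have : 1 * 1 ≤ Δ * Δ := Nat.mul_le_mul hΔ hΔ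
    omega
  have colLt : ∀ x : Fin Δ × Fin Δ, T Δ x / 2 < (Δ * Δ + 1) / 2 := by
    intro x; have := T_lt hΔ x; omega
  set c : Sym2 (Fin Δ ⊕ Fin Δ) → Fin ((Δ * Δ + 1) / 2) :=
    fun e => if h : ∃ x, emap x = e then ⟨T Δ (Classical.choose h) / 2, colLt _⟩ else ⟨0, hK⟩
    with hcdef
  have hc : ∀ x, c (emap x) = ⟨T Δ x / 2, colLt x⟩ := by
    intro x
    have hx : ∃ y, emap y = emap x := ⟨x, rfl⟩
    rw [hcdef]
    simp only [dif_pos hx]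
    congr 2
    rw [emap_inj (Classical.choose_spec hx)]
  refine ⟨c, ?_, ?_⟩
  · intro e he f hf hadj heq
    obtain ⟨x, rfl⟩ := mem_iff he
    obtain ⟨y, rfl⟩ := mem_iff hf
    rw [hc x, hc y, Fin.mk.injEq] at heq
    obtain ⟨hne, hshare⟩ := edgeAdj_iff.1 hadj
    have hxyne : x ≠ y := fun h => hne (by rw [h])
    have hTne : T Δ x ≠ T Δ y := fun h => hxyne (T_inj hΔ h)
    rcases Nat.lt_or_ge (T Δ x) (T Δ y) with hlt | hge
    · have h1 : T Δ y = T Δ x + 1 := by omega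
      have h2 : 2 ∣ T Δ x := by omega
      have hst := T_step hΔ h1 h2
      rcases hshare with h | h
      · exact hst.1 h
      · exact hst.2 h
    · have h1 : T Δ x = T Δ y + 1 := by omega
      have h2 : 2 ∣ T Δ y := by omega
      have hst := T_step hΔ h1 h2
      rcases hshare with h | h
      · exact hst.1 h.symm
      · exact hst.2 h.symm
  · intro e he f hf g hg
    obtain ⟨x, rfl⟩ := mem_iff he
    obtain ⟨hfe, hdf, hcf⟩ := hf
    obtain ⟨hge', hdg, hcg⟩ := hg
    obtain ⟨y, rfl⟩ := mem_iff hfe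
    obtain ⟨z, rfl⟩ := mem_iff hge'
    rw [hc x, hc y, Fin.mk.injEq] at hcf
    rw [hc x, hc z, Fin.mk.injEq] at hcg
    have hyx : y ≠ x := fun h => hdf.1 (by rw [h])
    have hTy : T Δ y ≠ T Δ x := fun h => hyx (T_inj hΔ h)
    have hzx : z ≠ x := fun h => hdg.1 (by rw [h])
    have hTz : T Δ z ≠ T Δ x := fun h => hzx (T_inj hΔ h)
    have hyz : T Δ y = T Δ z := by omega
    rw [T_inj hΔ hyz]

lemma lower {Δ : ℕ} (hΔ : 1 ≤ Δ) {k : ℕ} (c : Sym2 (Fin Δ ⊕ Fin Δ) → Fin k)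
    (hcol : IsRelaxedColoring (completeBipartiteGraph (Fin Δ) (Fin Δ)) c) :
    Δ * Δ ≤ 2 * k := by
  classical
  set p : Fin Δ × Fin Δ → Fin k := fun x => c (emap x) with hp
  have hfib : ∀ i ∈ Finset.univ.image p,
      (Finset.univ.filter fun x => p x = i).card ≤ 2 := by
    intro i _
    by_contra hgt
    obtain ⟨x, hx, y, hy, z, hz, hxy, hxz, hyz⟩ := Finset.two_lt_card.1 (show 2 < (Finset.univ.filter fun x => p x = i).card by omega)
    simp only [Finset.mem_filter] at hx hy hz
    have hd : ∀ u v : Fin Δ × Fin Δ, u ≠ v → p u = p v →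
        EdgeDist2 (completeBipartiteGraph (Fin Δ) (Fin Δ)) (emap u) (emap v) := by
      intro u v huv hpc
      rcases adj_or_dist2 huv with hadj | h2
      · exact absurd hpc (hcol.1 (emap u) (emap_mem u) (emap v) (emap_mem v) hadj)
      · exact h2
    have hsub := hcol.2 (emap x) (emap_mem x)
    have h1 : emap y ∈ {f | f ∈ (completeBipartiteGraph (Fin Δ) (Fin Δ)).edgeSet ∧
        EdgeDist2 (completeBipartiteGraph (Fin Δ) (Fin Δ)) (emap x) f ∧ c f = c (emap x)} :=
      ⟨emap_mem y, hd x y hxy (hx.2.trans hy.2.symm), hy.2.trans hx.2.symm⟩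
    have h2 : emap z ∈ {f | f ∈ (completeBipartiteGraph (Fin Δ) (Fin Δ)).edgeSet ∧
        EdgeDist2 (completeBipartiteGraph (Fin Δ) (Fin Δ)) (emap x) f ∧ c f = c (emap x)} :=
      ⟨emap_mem z, hd x z hxz (hx.2.trans hz.2.symm), hz.2.trans hx.2.symm⟩
    exact hyz (emap_inj (hsub h1 h2))
  have hle := Finset.card_le_mul_card_image (Finset.univ : Finset (Fin Δ × Fin Δ)) 2 hfib
  have hcard : (Finset.univ : Finset (Fin Δ × Fin Δ)).card = Δ * Δ := by simp
  have himg : (Finset.univ.image p).card ≤ k := by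
    have := Finset.card_le_univ (Finset.univ.image p)
    simpa using this
  omega

end RelAux

/-- The (0,1)-relaxed strong chromatic index of `K_{Δ,Δ}` (`Δ ≥ 1`) equals `⌈Δ²/2⌉`. -/
theorem relIndex_completeBipartite (Δ : ℕ) (hΔ : 1 ≤ Δ) :
    relIndex (completeBipartiteGraph (Fin Δ) (Fin Δ)) = (Δ ^ 2 + 1) / 2 := by
  have hsq : Δ ^ 2 = Δ * Δ := sq Δ
  obtain ⟨c, hcc⟩ := RelAux.upper hΔ
  have hmem : (Δ ^ 2 + 1) / 2 ∈ {k | ∃ c : Sym2 (Fin Δ ⊕ Fin Δ) → Fin k,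
      IsRelaxedColoring (completeBipartiteGraph (Fin Δ) (Fin Δ)) c} := by
    rw [Set.mem_setOf_eq, hsq]
    exact ⟨c, hcc⟩
  unfold relIndex
  apply le_antisymm
  · exact Nat.sInf_le hmem
  · obtain ⟨c', hc'⟩ := Nat.sInf_mem (⟨_, hmem⟩ : Set.Nonempty _)
    have hl := RelAux.lower hΔ c' hc'
    rw [hsq]
    omega
end

section
/- Let G be a graph with maximum degree Δ and e = uv an edge. Then |F(e)| ≤ Δ² − 1 − |C_e^Δ|/2 − |T₁(e)| − |T₂(e)|/2 − |T₆(e)|/2. Moreover, if equality holds then every vertex in N(u) ∪ N(v) has degree Δ. -/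
open SimpleGraph

variable {V : Type*}

/-- `N(e)`: the set of edges of `G` at distance 1 from `e`. -/
def Nset (G : SimpleGraph V) (e : Sym2 V) : Set (Sym2 V) :=
  {f | f ∈ G.edgeSet ∧ EdgeAdj e f}

/-- The set of edges of `G` at distance 2 from `e` (the 2-neighbors of `e`). -/
def Dist2Set (G : SimpleGraph V) (e : Sym2 V) : Set (Sym2 V) :=
  {f | f ∈ G.edgeSet ∧ EdgeDist2 G e f}

/-- The adjacent pairs of vertices `(x, y)` with `x` an endvertex of `e` and `y` an endvertex
of `f` ("cross edges" between `e` and `f`, with multiplicity of orientation from `e` to `f`). -/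
def crossPairs (G : SimpleGraph V) (e f : Sym2 V) : Set (V × V) :=
  {p | p.1 ∈ e ∧ p.2 ∈ f ∧ G.Adj p.1 p.2}

/-- Type 1 two-neighbors of `e`: all four cross edges present
(the induced subgraph on the four endvertices is `K₄`). -/
def T1 (G : SimpleGraph V) (e : Sym2 V) : Set (Sym2 V) :=
  {f | f ∈ Dist2Set G e ∧ (crossPairs G e f).ncard = 4}

/-- Type 2 two-neighbors of `e`: exactly three cross edges present. -/
def T2 (G : SimpleGraph V) (e : Sym2 V) : Set (Sym2 V) :=
  {f | f ∈ Dist2Set G e ∧ (crossPairs G e f).ncard = 3}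

/-- Type 3 two-neighbors of `e`: exactly two cross edges, both ending at the same endvertex
of `f` (so the endvertices of `e` have a common neighbor and `e` lies on a triangle of
the induced subgraph). -/
def T3 (G : SimpleGraph V) (e : Sym2 V) : Set (Sym2 V) :=
  {f | f ∈ Dist2Set G e ∧ (crossPairs G e f).ncard = 2 ∧
    ∃ y ∈ f, ∀ p ∈ crossPairs G e f, p.2 = y}

/-- Type 5 two-neighbors of `e`: exactly two cross edges, both starting at the same endvertex
of `e` (so `f` lies on a triangle of the induced subgraph). -/
def T5 (G : SimpleGraph V) (e : Sym2 V) : Set (Sym2 V) :=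
  {f | f ∈ Dist2Set G e ∧ (crossPairs G e f).ncard = 2 ∧
    ∃ x ∈ e, ∀ p ∈ crossPairs G e f, p.1 = x}

/-- Type 4 two-neighbors of `e`: exactly two cross edges forming a matching
(the induced subgraph on the four endvertices is a 4-cycle). -/
def T4 (G : SimpleGraph V) (e : Sym2 V) : Set (Sym2 V) :=
  {f | f ∈ Dist2Set G e ∧ (crossPairs G e f).ncard = 2 ∧
    (¬ ∃ y ∈ f, ∀ p ∈ crossPairs G e f, p.2 = y) ∧
    (¬ ∃ x ∈ e, ∀ p ∈ crossPairs G e f, p.1 = x)}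

/-- Type 6 two-neighbors of `e`: exactly one cross edge (the induced subgraph on the four
endvertices has exactly 3 edges). -/
def T6 (G : SimpleGraph V) (e : Sym2 V) : Set (Sym2 V) :=
  {f | f ∈ Dist2Set G e ∧ (crossPairs G e f).ncard = 1}

/-- `F(e) = N(e) ∪ T₁(e) ∪ T₂(e) ∪ T₃(e) ∪ T₄(e) ∪ T₅(e)`: the edges at distance 1 from `e`
together with the 2-neighbors with at least two cross edges. -/
def Fset (G : SimpleGraph V) (e : Sym2 V) : Set (Sym2 V) :=
  Nset G e ∪ {f | f ∈ Dist2Set G e ∧ 2 ≤ (crossPairs G e f).ncard}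

/-- `C_e^Δ`: the set of edges adjacent to `e` lying on a common triangle with `e`. -/
def CDelta (G : SimpleGraph V) (e : Sym2 V) : Set (Sym2 V) :=
  {f | ∃ w a b, G.Adj w a ∧ G.Adj w b ∧ G.Adj a b ∧ e = s(w, a) ∧ f = s(w, b)}

/-- Two edges lie on a common 4-cycle of `G`. -/
def OnCommonC4 (G : SimpleGraph V) (e f : Sym2 V) : Prop :=
  ∃ a b c d : V, G.Adj a b ∧ G.Adj b c ∧ G.Adj c d ∧ G.Adj d a ∧ a ≠ c ∧ b ≠ d ∧
    e ∈ ({s(a, b), s(b, c), s(c, d), s(d, a)} : Set (Sym2 V)) ∧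
    f ∈ ({s(a, b), s(b, c), s(c, d), s(d, a)} : Set (Sym2 V))

/-!
Count the walks `x w z` with `x` an endvertex of `e`, `w ∉ e` a neighbour of `x` and `z ≠ x`:
there are `∑ (d(w) - 1) ≤ 2(Δ - 1)²` of them. Grouped by their last edge `wz`, every edge of
`C_e^Δ` occurs at least once and every 2-neighbour `f` of `e` occurs exactly as often as there are
edges between `e` and `f`, which is 4, 3, 2 or 1 according to its type. Together with
`|N(e)| ≤ 2(Δ - 1)` this gives the bound, and equality forces each degree bound used to be tight.
-/

open Finset

section TwoNeighbors

variable {G : SimpleGraph V} {e f : Sym2 V}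

lemma notMem_of_mem_Dist2Set {x : V} (hf : f ∈ Dist2Set G e) (hx : x ∈ f) : x ∉ e :=
  fun hxe => hf.2.2.1 ⟨hf.2.1, x, hxe, hx⟩

lemma crossPairs_nonempty (hf : f ∈ Dist2Set G e) : (crossPairs G e f).Nonempty := by
  obtain ⟨g, hg, ⟨-, p, hpe, hpg⟩, ⟨-, q, hqf, hqg⟩⟩ := hf.2.2.2
  have hpq : p ≠ q := by rintro rfl; exact notMem_of_mem_Dist2Set hf hqf hpe
  rw [(Sym2.mem_and_mem_iff hpq).1 ⟨hpg, hqg⟩] at hg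
  exact ⟨(p, q), hpe, hqf, hg⟩

lemma ncard_crossPairs_le_four [DecidableEq V] (G : SimpleGraph V) (e f : Sym2 V) :
    (crossPairs G e f).ncard ≤ 4 := by
  calc (crossPairs G e f).ncard ≤ (↑(e.toFinset ×ˢ f.toFinset) : Set (V × V)).ncard :=
        Set.ncard_le_ncard (fun p hp => by simpa [Sym2.mem_toFinset] using ⟨hp.1, hp.2.1⟩)
    _ = #e.toFinset * #f.toFinset := by rw [Set.ncard_coe_finset, card_product]
    _ ≤ 2 * 2 := by
        gcongr <;> rw [Sym2.card_toFinset] <;> split_ifs <;> omega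

end TwoNeighbors

lemma ncard_sep_eq_card_filter {α : Type*} {s : Set α} (hs : s.Finite) (p : α → Prop)
    [DecidablePred p] : {x | x ∈ s ∧ p x}.ncard = #{x ∈ hs.toFinset | p x} := by
  rw [← Set.ncard_coe_finset]
  congr 1
  ext
  simp

lemma sum_eq_of_forall_mem_Icc_one_four {α : Type*} {s : Finset α} {g : α → ℕ}
    (hg : ∀ a ∈ s, g a ∈ Set.Icc 1 4) :
    ∑ a ∈ s, g a = 2 * #{a ∈ s | 2 ≤ g a} + 2 * #{a ∈ s | g a = 4} + #{a ∈ s | g a = 3} +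
      #{a ∈ s | g a = 1} := by
  simp only [card_filter, mul_sum, ← sum_add_distrib]
  refine sum_congr rfl fun a ha => ?_
  obtain ⟨h1, h4⟩ := hg a ha
  interval_cases g a <;> rfl

section Counting

variable [Fintype V] [DecidableEq V] {G : SimpleGraph V} {e : Sym2 V}

lemma two_mul_ncard_Fset_add :
    2 * (Fset G e).ncard + 2 * (T1 G e).ncard + (T2 G e).ncard + (T6 G e).ncard =
      2 * (Nset G e).ncard + ∑ f ∈ (Dist2Set G e).toFinite.toFinset, (crossPairs G e f).ncard := by
  have hcross : ∀ f ∈ (Dist2Set G e).toFinite.toFinset, (crossPairs G e f).ncard ∈ Set.Icc 1 4 :=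
    fun f hf => ⟨(Set.ncard_pos).2 (crossPairs_nonempty ((Set.Finite.mem_toFinset _).1 hf)),
      ncard_crossPairs_le_four G e f⟩
  have hdisj : Disjoint (Nset G e) {f | f ∈ Dist2Set G e ∧ 2 ≤ (crossPairs G e f).ncard} :=
    Set.disjoint_left.2 fun _ hN hD => hD.1.2.2.1 hN.2
  rw [sum_eq_of_forall_mem_Icc_one_four hcross, Fset, Set.ncard_union_eq hdisj, T1, T2, T6]
  simp only [ncard_sep_eq_card_filter (Dist2Set G e).toFinite]
  ring

end Counting

section Walks

variable [Fintype V] [DecidableEq V] (G : SimpleGraph V) [DecidableRel G.Adj] (e : Sym2 V)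

def outNbrs (x : V) : Finset V := {w ∈ G.neighborFinset x | w ∉ e}

def outWalks : Finset (Σ _ : V, Σ _ : V, V) :=
  e.toFinset.sigma fun x => (outNbrs G e x).sigma fun w => (G.neighborFinset w).erase x

variable {G e}

@[simp]
lemma mem_outNbrs {x w : V} : w ∈ outNbrs G e x ↔ G.Adj x w ∧ w ∉ e := by
  simp [outNbrs]

@[simp]
lemma mem_outWalks {x w z : V} :
    ⟨x, w, z⟩ ∈ outWalks G e ↔ x ∈ e ∧ (G.Adj x w ∧ w ∉ e) ∧ G.Adj w z ∧ z ≠ x := by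
  simp [outWalks, Sym2.mem_toFinset, and_comm]

lemma card_outNbrs (he : e ∈ G.edgeSet) {x : V} (hx : x ∈ e) :
    #(outNbrs G e x) = G.degree x - 1 := by
  obtain ⟨y, rfl⟩ := Sym2.mem_iff_exists.1 hx
  have : outNbrs G s(x, y) x = (G.neighborFinset x).erase y := by
    ext w
    simp only [mem_outNbrs, Sym2.mem_iff, mem_erase, mem_neighborFinset]
    exact ⟨fun h => ⟨fun hwy => h.2 (Or.inr hwy), h.1⟩,
      fun h => ⟨h.2, by rintro (rfl | rfl); exacts [h.2.ne rfl, h.1 rfl]⟩⟩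
  rw [this, card_erase_of_mem (by simpa using he), card_neighborFinset_eq_degree]

lemma card_outWalks :
    #(outWalks G e) = ∑ x ∈ e.toFinset, ∑ w ∈ outNbrs G e x, (G.degree w - 1) := by
  simp only [outWalks, card_sigma]
  refine sum_congr rfl fun x _ => sum_congr rfl fun w hw => ?_
  rw [card_erase_of_mem (by simpa using (mem_outNbrs.1 hw).1.symm), card_neighborFinset_eq_degree]

lemma ncard_Nset_le (he : e ∈ G.edgeSet) :
    (Nset G e).ncard ≤ ∑ x ∈ e.toFinset, (G.degree x - 1) := by
  have hsub : Nset G e ⊆ ((e.toFinset.sigma (outNbrs G e)).image fun p => s(p.1, p.2) :) := by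
    rintro f ⟨hf, hef, x, hxe, hxf⟩
    obtain ⟨w, rfl⟩ := Sym2.mem_iff_exists.1 hxf
    have hwe : w ∉ e := fun hwe => hef ((Sym2.mem_and_mem_iff (G.ne_of_adj hf)).1 ⟨hxe, hwe⟩)
    simp only [coe_image, Set.mem_image, mem_coe, mem_sigma, Sym2.mem_toFinset, mem_outNbrs]
    exact ⟨⟨x, w⟩, ⟨hxe, hf, hwe⟩, rfl⟩
  calc (Nset G e).ncard ≤ #((e.toFinset.sigma (outNbrs G e)).image fun p => s(p.1, p.2)) := by
        simpa only [Set.ncard_coe_finset] using Set.ncard_le_ncard hsub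
    _ ≤ #(e.toFinset.sigma (outNbrs G e)) := card_image_le
    _ = ∑ x ∈ e.toFinset, (G.degree x - 1) := by
        rw [card_sigma]
        exact sum_congr rfl fun x hx => card_outNbrs he (Sym2.mem_toFinset.1 hx)

lemma exists_mem_outWalks_of_mem_CDelta {f : Sym2 V} (hf : f ∈ CDelta G e) :
    ∃ p ∈ outWalks G e, s(p.2.1, p.2.2) = f := by
  obtain ⟨w, a, b, hwa, hwb, hab, rfl, rfl⟩ := hf
  have hb : b ∉ s(w, a) := by simp [Sym2.mem_iff, hwb.ne', hab.ne']
  exact ⟨⟨a, b, w⟩, mem_outWalks.2 ⟨Sym2.mem_mk_right w a, ⟨hab, hb⟩, hwb.symm, hwa.ne⟩,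
    Sym2.eq_swap⟩

lemma card_filter_outWalks_eq_ncard_crossPairs {f : Sym2 V} (hf : f ∈ Dist2Set G e) :
    #{p ∈ outWalks G e | s(p.2.1, p.2.2) = f} = (crossPairs G e f).ncard := by
  rw [← Set.ncard_coe_finset]
  refine Set.ncard_congr (fun p _ => (p.1, p.2.1)) ?_ ?_ ?_
  · rintro ⟨x, w, z⟩ hp
    simp only [mem_coe, mem_filter, mem_outWalks] at hp
    obtain ⟨⟨hx, ⟨hxw, -⟩, -⟩, rfl⟩ := hp
    exact ⟨hx, Sym2.mem_mk_left w z, hxw⟩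
  · rintro ⟨x, w, z⟩ ⟨x', w', z'⟩ hp hp' h
    simp only [mem_coe, mem_filter] at hp hp'
    simp only [Prod.mk.injEq] at h
    obtain ⟨rfl, rfl⟩ := h
    rw [Sym2.congr_right.1 (hp.2.trans hp'.2.symm)]
  · rintro ⟨x, y⟩ ⟨hx, hy, hxy⟩
    obtain ⟨z, rfl⟩ := Sym2.mem_iff_exists.1 hy
    refine ⟨⟨x, y, z⟩, ?_, rfl⟩
    simp only [mem_coe, mem_filter, mem_outWalks, and_true]
    exact ⟨hx, ⟨hxy, notMem_of_mem_Dist2Set hf hy⟩, hf.1,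
      fun hzx => notMem_of_mem_Dist2Set hf (Sym2.mem_mk_right y z) (hzx ▸ hx)⟩

lemma ncard_CDelta_add_sum_le :
    (CDelta G e).ncard + ∑ f ∈ (Dist2Set G e).toFinite.toFinset, (crossPairs G e f).ncard ≤
      #(outWalks G e) := by
  set C := (CDelta G e).toFinite.toFinset
  set D := (Dist2Set G e).toFinite.toFinset
  set fiber := fun f => #{p ∈ outWalks G e | s(p.2.1, p.2.2) = f}
  have hCD : Disjoint C D := disjoint_left.2 fun f hC hD => by
    simp only [C, D, Set.Finite.mem_toFinset] at hC hD
    obtain ⟨w, a, b, -, -, -, rfl, rfl⟩ := hC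
    exact notMem_of_mem_Dist2Set hD (Sym2.mem_mk_left w b) (Sym2.mem_mk_left w a)
  calc (CDelta G e).ncard + ∑ f ∈ D, (crossPairs G e f).ncard
      = ∑ f ∈ C, 1 + ∑ f ∈ D, fiber f := by
        rw [Set.ncard_eq_toFinset_card _ (CDelta G e).toFinite, card_eq_sum_ones]
        congr 1
        exact sum_congr rfl fun f hf =>
          (card_filter_outWalks_eq_ncard_crossPairs ((Set.Finite.mem_toFinset _).1 hf)).symm
    _ ≤ ∑ f ∈ C, fiber f + ∑ f ∈ D, fiber f := by
        gcongr with f hf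
        obtain ⟨p, hp, hpf⟩ := exists_mem_outWalks_of_mem_CDelta ((Set.Finite.mem_toFinset _).1 hf)
        exact card_pos.2 ⟨p, mem_filter.2 ⟨hp, hpf⟩⟩
    _ = #{p ∈ outWalks G e | s(p.2.1, p.2.2) ∈ C ∪ D} := by
        rw [← sum_union hCD, sum_card_fiberwise_eq_card_filter]
    _ ≤ #(outWalks G e) := card_filter_le _ _

end Walks

lemma sum_toFinset_eq_two_mul_sq_sub_one [DecidableEq V] {e : Sym2 V} (he : ¬e.IsDiag) (Δ : ℕ) :
    ∑ _x ∈ e.toFinset, (2 * (Δ - 1) + (Δ - 1) * (Δ - 1)) = 2 * (Δ ^ 2 - 1) := by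
  rw [sum_const, Sym2.card_toFinset_of_not_isDiag e he, smul_eq_mul]
  cases Δ with
  | zero => rfl
  | succ D =>
    simp only [Nat.add_sub_cancel]
    ring_nf
    omega

section Share

variable [Fintype V] [DecidableEq V] {G : SimpleGraph V} [DecidableRel G.Adj] {e : Sym2 V}
  {Δ : ℕ}

variable (G e) in
/-- What the endvertex `x` of `e` contributes to `2 |N(e)| + #(outWalks G e)`. -/
def endShare (x : V) : ℕ := 2 * (G.degree x - 1) + ∑ w ∈ outNbrs G e x, (G.degree w - 1)

lemma two_mul_ncard_Fset_add_le_sum_endShare (he : e ∈ G.edgeSet) :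
    2 * (Fset G e).ncard + (CDelta G e).ncard + 2 * (T1 G e).ncard + (T2 G e).ncard +
      (T6 G e).ncard ≤ ∑ x ∈ e.toFinset, endShare G e x := by
  have hF := two_mul_ncard_Fset_add (G := G) (e := e)
  have hW := ncard_CDelta_add_sum_le (G := G) (e := e)
  have hN := ncard_Nset_le he
  rw [card_outWalks] at hW
  simp only [endShare, sum_add_distrib, ← mul_sum]
  omega

lemma sum_outNbrs_le (hdeg : ∀ w, G.degree w ≤ Δ) (x : V) :
    ∑ w ∈ outNbrs G e x, (G.degree w - 1) ≤ ∑ _w ∈ outNbrs G e x, (Δ - 1) :=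
  sum_le_sum fun w _ => Nat.sub_le_sub_right (hdeg w) 1

lemma sum_outNbrs_const (he : e ∈ G.edgeSet) {x : V} (hx : x ∈ e) :
    ∑ _w ∈ outNbrs G e x, (Δ - 1) = (G.degree x - 1) * (Δ - 1) := by
  rw [sum_const, card_outNbrs he hx, smul_eq_mul]

lemma endShare_le (he : e ∈ G.edgeSet) (hdeg : ∀ w, G.degree w ≤ Δ) {x : V} (hx : x ∈ e) :
    endShare G e x ≤ 2 * (Δ - 1) + (Δ - 1) * (Δ - 1) := by
  have hS := sum_outNbrs_le (e := e) hdeg x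
  rw [sum_outNbrs_const he hx] at hS
  have := Nat.mul_le_mul_right (Δ - 1) (Nat.sub_le_sub_right (hdeg x) 1)
  have := hdeg x
  unfold endShare
  omega

lemma degree_eq_of_endShare_eq (he : e ∈ G.edgeSet) (hdeg : ∀ w, G.degree w ≤ Δ) {x : V}
    (hx : x ∈ e) (h : endShare G e x = 2 * (Δ - 1) + (Δ - 1) * (Δ - 1)) :
    G.degree x = Δ ∧ ∀ w ∈ outNbrs G e x, G.degree w = Δ := by
  have hS := sum_outNbrs_le (e := e) hdeg x
  have hconst := sum_outNbrs_const (Δ := Δ) he hx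
  have := Nat.mul_le_mul_right (Δ - 1) (Nat.sub_le_sub_right (hdeg x) 1)
  have := hdeg x
  have hxpos : 0 < G.degree x := by
    obtain ⟨y, rfl⟩ := Sym2.mem_iff_exists.1 hx
    exact G.degree_pos_iff_exists_adj x |>.2 ⟨y, he⟩
  unfold endShare at h
  refine ⟨by omega, fun w hw => ?_⟩
  have hwpos : 0 < G.degree w := G.degree_pos_iff_exists_adj w |>.2 ⟨x, (mem_outNbrs.1 hw).1.symm⟩
  have := (sum_eq_sum_iff_of_le fun w _ => Nat.sub_le_sub_right (hdeg w) 1).1 (by omega) w hw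
  have := hdeg w
  omega

lemma sum_endShare_le (he : e ∈ G.edgeSet) (hdeg : ∀ w, G.degree w ≤ Δ) :
    ∑ x ∈ e.toFinset, endShare G e x ≤ 2 * (Δ ^ 2 - 1) :=
  (sum_le_sum fun _ hx => endShare_le he hdeg (Sym2.mem_toFinset.1 hx)).trans_eq
    (sum_toFinset_eq_two_mul_sq_sub_one (G.not_isDiag_of_mem_edgeSet he) Δ)

lemma degree_eq_of_sum_endShare_eq (he : e ∈ G.edgeSet) (hdeg : ∀ w, G.degree w ≤ Δ)
    (h : ∑ x ∈ e.toFinset, endShare G e x = 2 * (Δ ^ 2 - 1)) {x w : V} (hx : x ∈ e)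
    (hxw : G.Adj x w) : G.degree w = Δ := by
  have htight : ∀ y ∈ e, endShare G e y = 2 * (Δ - 1) + (Δ - 1) * (Δ - 1) := fun y hy =>
    (sum_eq_sum_iff_of_le fun _ hz => endShare_le he hdeg (Sym2.mem_toFinset.1 hz)).1
      (h.trans (sum_toFinset_eq_two_mul_sq_sub_one (G.not_isDiag_of_mem_edgeSet he) Δ).symm) y
      (Sym2.mem_toFinset.2 hy)
  by_cases hw : w ∈ e
  · exact (degree_eq_of_endShare_eq he hdeg hw (htight w hw)).1
  · exact (degree_eq_of_endShare_eq he hdeg hx (htight x hx)).2 w (mem_outNbrs.2 ⟨hxw, hw⟩)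

end Share

/-- For any edge `e = uv` of a graph with maximum degree `Δ`,
`|F(e)| ≤ Δ² − 1 − |C_e^Δ|/2 − |T₁(e)| − |T₂(e)|/2 − |T₆(e)|/2` (stated multiplied by 2 to
avoid fractions); moreover if equality holds then every vertex in `N(u) ∪ N(v)` has degree `Δ`. -/
theorem Fset_card_bound [Fintype V] [DecidableEq V] (G : SimpleGraph V) [DecidableRel G.Adj]
    (Δ : ℕ) (hΔ : G.maxDegree = Δ) (u v : V) (huv : G.Adj u v) :
    2 * (Fset G s(u, v)).ncard + (CDelta G s(u, v)).ncard + 2 * (T1 G s(u, v)).ncard +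
        (T2 G s(u, v)).ncard + (T6 G s(u, v)).ncard ≤ 2 * (Δ ^ 2 - 1) ∧
      (2 * (Fset G s(u, v)).ncard + (CDelta G s(u, v)).ncard + 2 * (T1 G s(u, v)).ncard +
          (T2 G s(u, v)).ncard + (T6 G s(u, v)).ncard = 2 * (Δ ^ 2 - 1) →
        ∀ w, w ∈ G.neighborSet u ∪ G.neighborSet v → G.degree w = Δ) := by
  have he : s(u, v) ∈ G.edgeSet := huv
  have hdeg : ∀ w, G.degree w ≤ Δ := fun w => hΔ ▸ G.degree_le_maxDegree w
  have hle := two_mul_ncard_Fset_add_le_sum_endShare he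
  have hshare := sum_endShare_le he hdeg
  refine ⟨hle.trans hshare, fun heq w hw => ?_⟩
  have htight := le_antisymm hshare (heq ▸ hle)
  rcases hw with hw | hw
  · exact degree_eq_of_sum_endShare_eq he hdeg htight (Sym2.mem_mk_left u v) hw
  · exact degree_eq_of_sum_endShare_eq he hdeg htight (Sym2.mem_mk_right u v) hw
end

section
/- Let G be a connected graph with maximum degree Δ. There exists an edge e with |F(e)| = Δ² − 1 if and only if G is Δ-regular with exactly 2Δ vertices and there is an edge e = uv with N(u) ∪ N(v) = V(G) (i.e., G ∈ 𝒢_Δ). -/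
open SimpleGraph

variable {V : Type*}

section SSAux
set_option linter.unusedSectionVars false

open Finset

variable [Fintype V] [DecidableEq V] (G : SimpleGraph V) [DecidableRel G.Adj] (u v : V)

/-- number of neighbors of `y` among `{u, v}`. -/
def SScu (y : V) : ℕ := (({u, v} : Finset V).filter (fun x => G.Adj x y)).card

/-- edges of `G` avoiding both `u` and `v`. -/
def SSD : Finset (Sym2 V) := G.edgeFinset.filter (fun f => u ∉ f ∧ v ∉ f)

/-- cross pairs as a finset. -/
def SScp (f : Sym2 V) : Finset (V × V) :=
  Finset.univ.filter (fun p => p.1 ∈ s(u, v) ∧ p.2 ∈ f ∧ G.Adj p.1 p.2)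

/-- edges adjacent to `s(u,v)`. -/
def SSA : Finset (Sym2 V) :=
  G.edgeFinset.filter (fun f => f ≠ s(u, v) ∧ (u ∈ f ∨ v ∈ f))

/-- far edges with at least 2 cross pairs. -/
def SSB : Finset (Sym2 V) := (SSD G u v).filter (fun f => 2 ≤ (SScp G u v f).card)

def SSdegD (y : V) : ℕ := ((SSD G u v).filter (fun f => y ∈ f)).card

lemma SScross_coe (f : Sym2 V) : crossPairs G s(u, v) f = ↑(SScp G u v f) := by
  ext ⟨x, y⟩; simp [crossPairs, SScp]

lemma SScross_ncard (f : Sym2 V) :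
    (crossPairs G s(u, v) f).ncard = (SScp G u v f).card := by
  rw [SScross_coe, Set.ncard_coe_finset]

lemma SScu_pos {y : V} (h : G.Adj u y ∨ G.Adj v y) : 1 ≤ SScu G u v y := by
  rw [Nat.one_le_iff_ne_zero, Ne, SScu, Finset.card_eq_zero, Finset.filter_eq_empty_iff]
  push_neg
  rcases h with h | h
  · exact ⟨u, by simp, h⟩
  · exact ⟨v, by simp, h⟩

lemma SScu_eq_zero {y : V} (h1 : ¬ G.Adj u y) (h2 : ¬ G.Adj v y) : SScu G u v y = 0 := by
  rw [SScu, Finset.card_eq_zero, Finset.filter_eq_empty_iff]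
  rintro x hx
  simp only [Finset.mem_insert, Finset.mem_singleton] at hx
  rcases hx with rfl | rfl <;> assumption

lemma SScu_eq_two {y : V} (hne : u ≠ v) (h1 : G.Adj u y) (h2 : G.Adj v y) :
    SScu G u v y = 2 := by
  rw [SScu, Finset.filter_eq_self.2 (by
    rintro x hx
    simp only [Finset.mem_insert, Finset.mem_singleton] at hx
    rcases hx with rfl | rfl <;> assumption)]
  exact Finset.card_pair hne

lemma SScp_card (a b : V) (hab : a ≠ b) :
    (SScp G u v s(a, b)).card = SScu G u v a + SScu G u v b := by
  have hds : SScp G u v s(a, b) =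
      ((({u, v} : Finset V).filter (fun x => G.Adj x a)) ×ˢ {a}) ∪
      ((({u, v} : Finset V).filter (fun x => G.Adj x b)) ×ˢ {b}) := by
    ext ⟨x, y⟩
    simp only [SScp, Finset.mem_filter, Finset.mem_univ, true_and, Sym2.mem_iff,
      Finset.mem_union, Finset.mem_product, Finset.mem_singleton, Finset.mem_insert]
    constructor
    · rintro ⟨hx, (rfl | rfl), hadj⟩
      · exact Or.inl ⟨⟨hx, hadj⟩, rfl⟩
      · exact Or.inr ⟨⟨hx, hadj⟩, rfl⟩
    · rintro (⟨⟨hx, hadj⟩, rfl⟩ | ⟨⟨hx, hadj⟩, rfl⟩)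
      · exact ⟨hx, Or.inl rfl, hadj⟩
      · exact ⟨hx, Or.inr rfl, hadj⟩
  rw [hds, Finset.card_union_of_disjoint, Finset.card_product, Finset.card_product]
  · simp [SScu]
  · rw [Finset.disjoint_left]
    rintro ⟨x, y⟩ h1 h2
    simp only [Finset.mem_product, Finset.mem_singleton] at h1 h2
    exact hab (h1.2 ▸ h2.2 ▸ rfl)

lemma SSdeg_split {y : V} (hyu : y ≠ u) (hyv : y ≠ v) :
    G.degree y = SSdegD G u v y + SScu G u v y := by
  have h0 : (G.incidenceFinset y).card = G.degree y := G.card_incidenceFinset_eq_degree y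
  have hsplit := Finset.card_filter_add_card_filter_not
    (s := G.incidenceFinset y) (p := fun f => u ∈ f ∨ v ∈ f)
  have h1 : (G.incidenceFinset y).filter (fun f => ¬ (u ∈ f ∨ v ∈ f)) =
      (SSD G u v).filter (fun f => y ∈ f) := by
    ext f
    simp only [Finset.mem_filter, mem_incidenceFinset, SimpleGraph.incidenceSet, Set.mem_sep_iff, SSD, mem_edgeFinset]
    constructor
    · rintro ⟨hf, h⟩
      push_neg at h
      exact ⟨⟨hf.1, h.1, h.2⟩, hf.2⟩
    · rintro ⟨⟨hf, h1, h2⟩, hy⟩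
      exact ⟨⟨hf, hy⟩, by push_neg; exact ⟨h1, h2⟩⟩
  have h2 : (G.incidenceFinset y).filter (fun f => u ∈ f ∨ v ∈ f) =
      (({u, v} : Finset V).filter (fun x => G.Adj x y)).image (fun w => s(y, w)) := by
    ext f
    simp only [Finset.mem_filter, mem_incidenceFinset, SimpleGraph.incidenceSet, Set.mem_sep_iff,
      Finset.mem_image, Finset.mem_insert, Finset.mem_singleton]
    constructor
    · rintro ⟨⟨hf, hy⟩, (hu | hv)⟩
      · have hfe : f = s(y, u) := (Sym2.mem_and_mem_iff hyu).1 ⟨hy, hu⟩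
        subst hfe
        exact ⟨u, ⟨Or.inl rfl, (G.mem_edgeSet.1 hf).symm⟩, rfl⟩
      · have hfe : f = s(y, v) := (Sym2.mem_and_mem_iff hyv).1 ⟨hy, hv⟩
        subst hfe
        exact ⟨v, ⟨Or.inr rfl, (G.mem_edgeSet.1 hf).symm⟩, rfl⟩
    · rintro ⟨w, ⟨hw, hadj⟩, rfl⟩
      refine ⟨⟨G.mem_edgeSet.2 hadj.symm, Sym2.mem_mk_left _ _⟩, ?_⟩
      rcases hw with rfl | rfl
      · exact Or.inl (Sym2.mem_mk_right _ _)
      · exact Or.inr (Sym2.mem_mk_right _ _)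
  have h3 : ((({u, v} : Finset V).filter (fun x => G.Adj x y)).image
      (fun w => s(y, w))).card = SScu G u v y := by
    rw [Finset.card_image_of_injOn, SScu]
    intro a ha b hb hab
    exact Sym2.congr_right.1 hab
  rw [h1, h2, h3] at hsplit
  rw [h0] at hsplit
  rw [← hsplit, SSdegD]
  ring

lemma SScu_split (hne : u ≠ v) (y : V) :
    SScu G u v y = (if G.Adj u y then 1 else 0) + (if G.Adj v y then 1 else 0) := by
  rw [SScu]
  rw [show ({u, v} : Finset V) = insert u {v} from rfl, Finset.filter_insert,
    Finset.filter_singleton]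
  split_ifs with h1 h2 h2 <;>
    simp [Finset.card_insert_of_notMem, Finset.mem_singleton, hne]

lemma SSdeg_as_sum (x : V) : G.degree x = ∑ y : V, (if G.Adj x y then 1 else 0) := by
  rw [← SimpleGraph.card_neighborFinset_eq_degree]
  have h : G.neighborFinset x = Finset.univ.filter (fun y => G.Adj x y) := by
    ext y; simp [SimpleGraph.mem_neighborFinset]
  rw [h, Finset.card_filter]

lemma SSsum_cu (huv : G.Adj u v) :
    (∑ y ∈ Finset.univ \ {u, v}, SScu G u v y) + 2 = G.degree u + G.degree v := by
  have hne : u ≠ v := huv.ne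
  have key : ∀ x ∈ ({u, v} : Finset V),
      (∑ y ∈ Finset.univ \ {u, v}, (if G.Adj x y then 1 else 0)) + 1 = G.degree x := by
    intro x hx
    have hsd : (∑ y ∈ Finset.univ \ {u, v}, (if G.Adj x y then 1 else 0)) +
        (∑ y ∈ ({u, v} : Finset V), (if G.Adj x y then 1 else 0)) =
        ∑ y : V, (if G.Adj x y then 1 else 0) :=
      Finset.sum_sdiff (Finset.subset_univ _)
    have hpair : (∑ y ∈ ({u, v} : Finset V), (if G.Adj x y then 1 else 0)) = 1 := by
      rw [Finset.sum_pair hne]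
      simp only [Finset.mem_insert, Finset.mem_singleton] at hx
      rcases hx with rfl | rfl
      · simp [huv, G.irrefl]
      · simp [huv.symm, G.irrefl]
    rw [hpair] at hsd
    rw [hsd, ← SSdeg_as_sum]
  have hu := key u (by simp)
  have hv := key v (by simp)
  have : ∑ y ∈ Finset.univ \ {u, v}, SScu G u v y =
      (∑ y ∈ Finset.univ \ {u, v}, (if G.Adj u y then 1 else 0)) +
      (∑ y ∈ Finset.univ \ {u, v}, (if G.Adj v y then 1 else 0)) := by
    rw [← Finset.sum_add_distrib]
    exact Finset.sum_congr rfl fun y _ => SScu_split G u v hne y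
  omega

lemma SSA_card (huv : G.Adj u v) :
    (SSA G u v).card + 2 = G.degree u + G.degree v := by
  have hne : u ≠ v := huv.ne
  have he : s(u, v) ∈ G.incidenceFinset u ∪ G.incidenceFinset v := by
    simp [mem_incidenceFinset, SimpleGraph.incidenceSet, Set.mem_sep_iff, huv]
  have hA : SSA G u v = (G.incidenceFinset u ∪ G.incidenceFinset v).erase s(u, v) := by
    ext f
    simp only [SSA, Finset.mem_filter, mem_edgeFinset, Finset.mem_erase, Finset.mem_union,
      mem_incidenceFinset, SimpleGraph.incidenceSet, Set.mem_sep_iff]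
    tauto
  have hi : G.incidenceFinset u ∩ G.incidenceFinset v = {s(u, v)} := by
    ext f
    simp only [Finset.mem_inter, mem_incidenceFinset, SimpleGraph.incidenceSet, Set.mem_sep_iff,
      Finset.mem_singleton]
    constructor
    · rintro ⟨⟨hf, hu⟩, ⟨_, hv⟩⟩
      exact (Sym2.mem_and_mem_iff hne).1 ⟨hu, hv⟩
    · rintro rfl
      exact ⟨⟨G.mem_edgeSet.2 huv, Sym2.mem_mk_left _ _⟩,
        G.mem_edgeSet.2 huv, Sym2.mem_mk_right _ _⟩
  have hcu := Finset.card_union_add_card_inter (G.incidenceFinset u) (G.incidenceFinset v)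
  rw [hi, Finset.card_singleton, G.card_incidenceFinset_eq_degree,
    G.card_incidenceFinset_eq_degree] at hcu
  have hce := Finset.card_erase_add_one he
  rw [hA]
  omega

lemma SSNset_eq (huv : G.Adj u v) : Nset G s(u, v) = ↑(SSA G u v) := by
  ext f
  simp only [Nset, Set.mem_setOf_eq, SSA, Finset.coe_filter, mem_edgeFinset, EdgeAdj,
    Sym2.mem_iff]
  constructor
  · rintro ⟨hf, hne, w, (rfl | rfl), hw⟩
    · exact ⟨hf, Ne.symm hne, Or.inl hw⟩
    · exact ⟨hf, Ne.symm hne, Or.inr hw⟩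
  · rintro ⟨hf, hne, (hw | hw)⟩
    · exact ⟨hf, Ne.symm hne, u, Or.inl rfl, hw⟩
    · exact ⟨hf, Ne.symm hne, v, Or.inr rfl, hw⟩

lemma SSfar_eq (huv : G.Adj u v) :
    {f | f ∈ Dist2Set G s(u, v) ∧ 2 ≤ (crossPairs G s(u, v) f).ncard} = ↑(SSB G u v) := by
  ext f
  simp only [Set.mem_setOf_eq, SSB, Finset.coe_filter, Dist2Set, SSD, Finset.mem_filter,
    mem_edgeFinset]
  rw [SScross_ncard]
  constructor
  · rintro ⟨⟨hf, hne, hnadj, g, hg⟩, hcp⟩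
    refine ⟨⟨hf, ?_, ?_⟩, hcp⟩
    · intro hu
      exact hnadj ⟨hne, u, Sym2.mem_mk_left _ _, hu⟩
    · intro hv
      exact hnadj ⟨hne, v, Sym2.mem_mk_right _ _, hv⟩
  · rintro ⟨⟨hf, hu, hv⟩, hcp⟩
    refine ⟨⟨hf, ?_, ?_, ?_⟩, hcp⟩
    · rintro rfl
      exact hu (Sym2.mem_mk_left _ _)
    · rintro ⟨hne, w, hw1, hw2⟩
      rw [Sym2.mem_iff] at hw1
      rcases hw1 with rfl | rfl
      · exact hu hw2
      · exact hv hw2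
    · have hpos : 0 < (SScp G u v f).card := by omega
      obtain ⟨⟨x, y⟩, hp⟩ := Finset.card_pos.1 hpos
      simp only [SScp, Finset.mem_filter, Finset.mem_univ, true_and] at hp
      obtain ⟨hx, hy, hadj⟩ := hp
      have hyuv : y ≠ u ∧ y ≠ v := by
        constructor <;> rintro rfl <;> [exact hu hy; exact hv hy]
      refine ⟨s(x, y), G.mem_edgeSet.2 hadj, ⟨?_, x, hx, Sym2.mem_mk_left _ _⟩,
        ⟨?_, y, hy, Sym2.mem_mk_right _ _⟩⟩
      · intro hcon
        have : y ∈ s(u, v) := hcon ▸ Sym2.mem_mk_right x y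
        rw [Sym2.mem_iff] at this
        rcases this with rfl | rfl
        · exact hyuv.1 rfl
        · exact hyuv.2 rfl
      · intro hcon
        have hxf : x ∈ f := hcon ▸ Sym2.mem_mk_left x y
        rw [Sym2.mem_iff] at hx
        rcases hx with rfl | rfl
        · exact hu hxf
        · exact hv hxf

lemma SSdisjAB : Disjoint (SSA G u v) (SSB G u v) := by
  rw [Finset.disjoint_left]
  intro f hfA hfB
  simp only [SSA, Finset.mem_filter] at hfA
  simp only [SSB, SSD, Finset.mem_filter] at hfB
  rcases hfA.2.2 with h | h
  · exact hfB.1.2.1 h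
  · exact hfB.1.2.2 h

lemma SSFset_ncard (huv : G.Adj u v) :
    (Fset G s(u, v)).ncard = (SSA G u v).card + (SSB G u v).card := by
  rw [Fset, SSNset_eq G u v huv, SSfar_eq G u v huv, ← Finset.coe_union,
    Set.ncard_coe_finset, Finset.card_union_of_disjoint (SSdisjAB G u v)]

lemma SSdegD_zero {y : V} (hy : y = u ∨ y = v) : SSdegD G u v y = 0 := by
  rw [SSdegD, Finset.card_eq_zero, Finset.filter_eq_empty_iff]
  intro f hf
  simp only [SSD, Finset.mem_filter] at hf
  rcases hy with rfl | rfl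
  · exact hf.2.1
  · exact hf.2.2

lemma SSsum_cp :
    ∑ f ∈ SSD G u v, (SScp G u v f).card =
      ∑ y ∈ Finset.univ \ {u, v}, SScu G u v y * SSdegD G u v y := by
  have step1 : ∀ f ∈ SSD G u v,
      (SScp G u v f).card = ∑ y : V, (if y ∈ f then SScu G u v y else 0) := by
    intro f hf
    have hfE : f ∈ G.edgeFinset := (Finset.mem_filter.1 hf).1
    induction f using Sym2.ind with
    | _ a b =>
      have hab : a ≠ b := (G.mem_edgeSet.1 (mem_edgeFinset.1 hfE)).ne
      rw [SScp_card G u v a b hab, ← Finset.sum_filter]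
      have hset : Finset.univ.filter (fun y => y ∈ s(a, b)) = {a, b} := by
        ext y; simp [Sym2.mem_iff]
      rw [hset, Finset.sum_pair hab]
  calc ∑ f ∈ SSD G u v, (SScp G u v f).card
      = ∑ f ∈ SSD G u v, ∑ y : V, (if y ∈ f then SScu G u v y else 0) :=
        Finset.sum_congr rfl step1
    _ = ∑ y : V, ∑ f ∈ SSD G u v, (if y ∈ f then SScu G u v y else 0) := Finset.sum_comm
    _ = ∑ y : V, SScu G u v y * SSdegD G u v y := by
        refine Finset.sum_congr rfl fun y _ => ?_
        rw [← Finset.sum_filter, Finset.sum_const, smul_eq_mul, mul_comm, SSdegD]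
    _ = ∑ y ∈ Finset.univ \ {u, v}, SScu G u v y * SSdegD G u v y := by
        refine (Finset.sum_subset (Finset.subset_univ _) fun y _ hy => ?_).symm
        have : y = u ∨ y = v := by
          by_contra hcon
          push_neg at hcon
          exact hy (by simp [Finset.mem_sdiff, hcon.1, hcon.2])
        rw [SSdegD_zero G u v this, mul_zero]

lemma SSwalk_boundary {S : Set V} :
    ∀ {a b : V}, G.Walk a b → a ∈ S → b ∉ S → ∃ y z, G.Adj y z ∧ y ∈ S ∧ z ∉ S := by
  intro a b p
  induction p with
  | nil => intro ha hb; exact absurd ha hb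
  | @cons x y z h q ih =>
    intro ha hb
    by_cases hyS : y ∈ S
    · exact ih hyS hb
    · exact ⟨x, y, h, ha, hyS⟩

lemma SScp_two (hcov : ∀ z, G.Adj u z ∨ G.Adj v z) (f : Sym2 V) (hf : f ∈ SSD G u v) :
    2 ≤ (SScp G u v f).card := by
  induction f using Sym2.ind with
  | _ a b =>
    simp only [SSD, Finset.mem_filter, mem_edgeFinset] at hf
    have hab : a ≠ b := (G.mem_edgeSet.1 hf.1).ne
    rw [SScp_card G u v a b hab]
    have h1 : 1 ≤ SScu G u v a := SScu_pos G u v (hcov a)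
    have h2 : 1 ≤ SScu G u v b := SScu_pos G u v (hcov b)
    omega

lemma SSAB_eq (huv : G.Adj u v) (hcov : ∀ z, G.Adj u z ∨ G.Adj v z) :
    SSA G u v ∪ SSB G u v = G.edgeFinset.erase s(u, v) := by
  ext f
  simp only [Finset.mem_union, Finset.mem_erase]
  constructor
  · rintro (hfA | hfB)
    · simp only [SSA, Finset.mem_filter] at hfA
      exact ⟨hfA.2.1, hfA.1⟩
    · simp only [SSB, SSD, Finset.mem_filter] at hfB
      refine ⟨?_, hfB.1.1⟩
      rintro rfl
      exact hfB.1.2.1 (Sym2.mem_mk_left _ _)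
  · rintro ⟨hne, hf⟩
    by_cases hm : u ∈ f ∨ v ∈ f
    · exact Or.inl (Finset.mem_filter.2 ⟨hf, hne, hm⟩)
    · push_neg at hm
      have hfD : f ∈ SSD G u v := Finset.mem_filter.2 ⟨hf, hm.1, hm.2⟩
      exact Or.inr (Finset.mem_filter.2 ⟨hfD, SScp_two G u v hcov f hfD⟩)

end SSAux
/-- For a connected graph `G` with maximum degree `Δ`: there exists an edge `e` with
`|F(e)| = Δ² − 1` if and only if `G` is `Δ`-regular on `2Δ` vertices with an edge `uv`
such that `N(u) ∪ N(v) = V(G)` (i.e. `G ∈ 𝒢_Δ`). -/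
theorem Fset_card_eq_iff [Fintype V] [DecidableEq V] (G : SimpleGraph V) [DecidableRel G.Adj]
    (Δ : ℕ) (hΔ : G.maxDegree = Δ) (hconn : G.Connected) :
    (∃ e ∈ G.edgeSet, (Fset G e).ncard = Δ ^ 2 - 1) ↔
      (G.IsRegularOfDegree Δ ∧ Fintype.card V = 2 * Δ ∧
        ∃ u v, G.Adj u v ∧ G.neighborSet u ∪ G.neighborSet v = Set.univ) := by
  constructor
  · rintro ⟨e, he, hF⟩
    revert he hF
    refine Sym2.ind ?_ e
    intro u v he hF
    have huv : G.Adj u v := G.mem_edgeSet.1 he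
    have hne : u ≠ v := huv.ne
    have hdupos : 0 < G.degree u := by
      rw [← G.card_neighborFinset_eq_degree]
      exact Finset.card_pos.2 ⟨v, (G.mem_neighborFinset u v).2 huv⟩
    have hΔ1 : 1 ≤ Δ := by
      have := G.degree_le_maxDegree u
      omega
    obtain ⟨δ, rfl⟩ : ∃ δ, Δ = δ + 1 := ⟨Δ - 1, by omega⟩
    have hdu : G.degree u ≤ δ + 1 := hΔ ▸ G.degree_le_maxDegree u
    have hdv : G.degree v ≤ δ + 1 := hΔ ▸ G.degree_le_maxDegree v
    set c := ∑ y ∈ Finset.univ \ {u, v}, SScu G u v y with hc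
    have hsumcu := SSsum_cu G u v huv
    have hAcard := SSA_card G u v huv
    have hF' : (SSA G u v).card + (SSB G u v).card = δ ^ 2 + 2 * δ := by
      rw [SSFset_ncard G u v huv] at hF
      have hsq : (δ + 1) ^ 2 = δ ^ 2 + 2 * δ + 1 := by ring
      omega
    have hterm : ∀ y ∈ Finset.univ \ {u, v},
        SScu G u v y * SSdegD G u v y ≤ SScu G u v y * δ := by
      intro y hy
      simp only [Finset.mem_sdiff, Finset.mem_insert, Finset.mem_singleton] at hy
      push_neg at hy
      rcases Nat.eq_zero_or_pos (SScu G u v y) with h0 | hpos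
      · simp [h0]
      · have hdeg := SSdeg_split G u v hy.2.1 hy.2.2
        have hdy : G.degree y ≤ δ + 1 := hΔ ▸ G.degree_le_maxDegree y
        have : SSdegD G u v y ≤ δ := by omega
        exact Nat.mul_le_mul_left _ this
    have hS_le : ∑ f ∈ SSD G u v, (SScp G u v f).card ≤ c * δ := by
      rw [SSsum_cp]
      calc ∑ y ∈ Finset.univ \ {u, v}, SScu G u v y * SSdegD G u v y
          ≤ ∑ y ∈ Finset.univ \ {u, v}, SScu G u v y * δ := Finset.sum_le_sum hterm
        _ = c * δ := by rw [← Finset.sum_mul]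
    have hB_le : 2 * (SSB G u v).card ≤ ∑ f ∈ SSB G u v, (SScp G u v f).card := by
      have := Finset.card_nsmul_le_sum (SSB G u v) (fun f => (SScp G u v f).card) 2
        (fun f hf => (Finset.mem_filter.1 hf).2)
      simpa [mul_comm] using this
    have hBD : ∑ f ∈ SSB G u v, (SScp G u v f).card ≤
        ∑ f ∈ SSD G u v, (SScp G u v f).card :=
      Finset.sum_le_sum_of_subset (Finset.filter_subset _ _)
    have hcle : c ≤ 2 * δ := by omega
    have hAc : (SSA G u v).card = c := by omega
    have h2B : 2 * (SSB G u v).card ≤ c * δ := le_trans hB_le (le_trans hBD hS_le)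
    have hsq : δ ^ 2 = δ * δ := sq δ
    have hceq : c = 2 * δ := by nlinarith [hF', hAc, h2B, hcle]
    have hdueq : G.degree u = δ + 1 := by omega
    have hdveq : G.degree v = δ + 1 := by omega
    have hBcard : (SSB G u v).card = δ * δ := by
      have hA2 : (SSA G u v).card = 2 * δ := by omega
      linarith [hF', hsq]
    have hS_le2 : ∑ f ∈ SSD G u v, (SScp G u v f).card ≤ 2 * (δ * δ) := by
      have hcd : c * δ = 2 * (δ * δ) := by rw [hceq]; ring
      omega
    have hSD_eq : ∑ f ∈ SSD G u v, (SScp G u v f).card = 2 * (δ * δ) := by omega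
    have hSB_eq : ∑ f ∈ SSB G u v, (SScp G u v f).card =
        ∑ f ∈ SSD G u v, (SScp G u v f).card := by omega
    -- termwise equality in the vertex sum
    have htermeq : ∀ y ∈ Finset.univ \ {u, v},
        SScu G u v y * SSdegD G u v y = SScu G u v y * δ := by
      refine (Finset.sum_eq_sum_iff_of_le hterm).1 ?_
      rw [← SSsum_cp, hSD_eq, ← Finset.sum_mul, ← hc, hceq]
      ring
    -- edges outside B have no cross pairs
    have hDB0 : ∀ f ∈ SSD G u v \ SSB G u v, (SScp G u v f).card = 0 := by
      have hsub : SSB G u v ⊆ SSD G u v := Finset.filter_subset _ _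
      have hsd : (∑ f ∈ SSD G u v \ SSB G u v, (SScp G u v f).card) +
          ∑ f ∈ SSB G u v, (SScp G u v f).card =
          ∑ f ∈ SSD G u v, (SScp G u v f).card := Finset.sum_sdiff hsub
      intro f hf
      have hz : ∑ f ∈ SSD G u v \ SSB G u v, (SScp G u v f).card = 0 := by
        rw [hSB_eq] at hsd
        omega
      exact Finset.sum_eq_zero_iff.1 hz f hf
    -- structural facts
    have P1 : ∀ y, y ≠ u → y ≠ v → 1 ≤ SScu G u v y →
        G.degree y = δ + 1 ∧ SScu G u v y = 1 := by
      intro y hyu hyv hcu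
      have hy : y ∈ Finset.univ \ {u, v} := by simp [hyu, hyv]
      have hteq := htermeq y hy
      have hdegD : SSdegD G u v y = δ :=
        Nat.eq_of_mul_eq_mul_left (by omega) hteq
      have hsplit := SSdeg_split G u v hyu hyv
      have hdy : G.degree y ≤ δ + 1 := hΔ ▸ G.degree_le_maxDegree y
      omega
    have P2 : ∀ y z, G.Adj y z → (G.Adj u y ∨ G.Adj v y) →
        y ≠ u → y ≠ v → z ≠ u → z ≠ v → (G.Adj u z ∨ G.Adj v z) := by
      intro y z hyz hyS hyu hyv hzu hzv
      by_contra hz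
      push_neg at hz
      have hcz : SScu G u v z = 0 := SScu_eq_zero G u v hz.1 hz.2
      have hcy : SScu G u v y = 1 := (P1 y hyu hyv (SScu_pos G u v hyS)).2
      have hfD : s(y, z) ∈ SSD G u v := by
        refine Finset.mem_filter.2 ⟨mem_edgeFinset.2 (G.mem_edgeSet.2 hyz), ?_, ?_⟩
        · rw [Sym2.mem_iff]; push_neg; exact ⟨Ne.symm hyu, Ne.symm hzu⟩
        · rw [Sym2.mem_iff]; push_neg; exact ⟨Ne.symm hyv, Ne.symm hzv⟩
      have hcp : (SScp G u v s(y, z)).card = 1 := by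
        rw [SScp_card G u v y z hyz.ne, hcy, hcz]
      have hfB : s(y, z) ∉ SSB G u v := by
        intro hmem
        have := (Finset.mem_filter.1 hmem).2
        omega
      have := hDB0 s(y, z) (Finset.mem_sdiff.2 ⟨hfD, hfB⟩)
      omega
    have P3 : ∀ z, G.Adj u z ∨ G.Adj v z := by
      intro z
      by_contra hz
      obtain ⟨p⟩ := hconn.preconnected u z
      obtain ⟨y, z', hadj, hyS, hz'S⟩ :=
        SSwalk_boundary G (S := {w | G.Adj u w ∨ G.Adj v w}) p (Or.inr huv.symm) hz
      have hyu : y ≠ u := by rintro rfl; exact hz'S (Or.inl hadj)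
      have hyv : y ≠ v := by rintro rfl; exact hz'S (Or.inr hadj)
      have hz'u : z' ≠ u := by rintro rfl; exact hz'S (Or.inr huv.symm)
      have hz'v : z' ≠ v := by rintro rfl; exact hz'S (Or.inl huv)
      exact hz'S (P2 y z' hadj hyS hyu hyv hz'u hz'v)
    have hcover : G.neighborSet u ∪ G.neighborSet v = Set.univ := by
      ext z
      simpa [SimpleGraph.mem_neighborSet] using P3 z
    have hreg : G.IsRegularOfDegree (δ + 1) := by
      intro w
      by_cases hwu : w = u
      · exact hwu ▸ hdueq
      by_cases hwv : w = v
      · exact hwv ▸ hdveq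
      exact (P1 w hwu hwv (SScu_pos G u v (P3 w))).1
    refine ⟨hreg, ?_, u, v, huv, hcover⟩
    have hdisj : Disjoint (G.neighborFinset u) (G.neighborFinset v) := by
      rw [Finset.disjoint_left]
      intro w hwu hwv
      rw [SimpleGraph.mem_neighborFinset] at hwu hwv
      have h1 : w ≠ u := fun h => G.irrefl (h ▸ hwu)
      have h2 : w ≠ v := fun h => G.irrefl (h ▸ hwv)
      have := (P1 w h1 h2 (SScu_pos G u v (Or.inl hwu))).2
      have h2' := SScu_eq_two G u v hne hwu hwv
      omega
    have huniv : (Finset.univ : Finset V) = G.neighborFinset u ∪ G.neighborFinset v := by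
      ext z
      simp only [Finset.mem_univ, true_iff, Finset.mem_union, SimpleGraph.mem_neighborFinset]
      exact P3 z
    rw [← Finset.card_univ, huniv, Finset.card_union_of_disjoint hdisj,
      G.card_neighborFinset_eq_degree, G.card_neighborFinset_eq_degree, hdueq, hdveq]
    ring
  · rintro ⟨hreg, hcard, u, v, huv, hcover⟩
    refine ⟨s(u, v), G.mem_edgeSet.2 huv, ?_⟩
    have hcov : ∀ z, G.Adj u z ∨ G.Adj v z := by
      intro z
      have hzm : z ∈ G.neighborSet u ∪ G.neighborSet v := by rw [hcover]; trivial
      simpa [SimpleGraph.mem_neighborSet] using hzm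
    have hE : G.edgeFinset.card = Δ ^ 2 := by
      have h2 := G.sum_degrees_eq_twice_card_edges
      have hsum : ∑ w : V, G.degree w = 2 * Δ * Δ := by
        rw [Finset.sum_congr rfl fun w _ => hreg w, Finset.sum_const, smul_eq_mul,
          Finset.card_univ, hcard]
      rw [hsum, mul_assoc] at h2
      have h3 : Δ * Δ = G.edgeFinset.card := Nat.eq_of_mul_eq_mul_left (by norm_num) h2
      rw [sq]
      omega
    have hmem : s(u, v) ∈ G.edgeFinset := mem_edgeFinset.2 (G.mem_edgeSet.2 huv)
    rw [SSFset_ncard G u v huv, ← Finset.card_union_of_disjoint (SSdisjAB G u v),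
      SSAB_eq G u v huv hcov, Finset.card_erase_of_mem hmem, hE]
end

section
/- Let Δ ≥ 3, let G ∈ 𝒢_Δ be connected and not isomorphic to K_{Δ,Δ}, and let e = uv be an edge of G with N(u) ∪ N(v) = V(G). Then there exist vertices u' ∈ N(u)\{v} and v' ∈ N(v)\{u} with u'v' ∉ E(G); consequently the edges uu' and vv' do not lie on a common 4-cycle, and χ'_ss(G) ≤ Δ² − 1 and χ'_{(0,1)}(G) ≤ Δ² − 1. -/
open SimpleGraph

variable {V : Type*}

/- Auxiliary lemmas -/


lemma iso_aux [Fintype V] [DecidableEq V] (G : SimpleGraph V) [DecidableRel G.Adj] (Δ : ℕ)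
    (u v : V)
    (hu : (G.neighborFinset u).card = Δ) (hv : (G.neighborFinset v).card = Δ)
    (hcover : ∀ x, x ∈ G.neighborFinset u ∨ x ∈ G.neighborFinset v)
    (hdisj : ∀ x, x ∈ G.neighborFinset u → x ∈ G.neighborFinset v → False)
    (hadj : ∀ x ∈ G.neighborFinset u, ∀ y ∈ G.neighborFinset v, G.Adj x y)
    (hnoU : ∀ x ∈ G.neighborFinset u, ∀ y ∈ G.neighborFinset u, ¬ G.Adj x y)
    (hnoV : ∀ x ∈ G.neighborFinset v, ∀ y ∈ G.neighborFinset v, ¬ G.Adj x y) :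
    Nonempty (G ≃g completeBipartiteGraph (Fin Δ) (Fin Δ)) := by
  have e1 : ↥(G.neighborFinset u) ≃ Fin Δ :=
    Fintype.equivFinOfCardEq (by rw [Fintype.card_coe]; exact hu)
  have e2 : ↥(G.neighborFinset v) ≃ Fin Δ :=
    Fintype.equivFinOfCardEq (by rw [Fintype.card_coe]; exact hv)
  let f : V → Fin Δ ⊕ Fin Δ := fun x =>
    if h : x ∈ G.neighborFinset u then Sum.inl (e1 ⟨x, h⟩)
    else Sum.inr (e2 ⟨x, (hcover x).resolve_left h⟩)
  let g : Fin Δ ⊕ Fin Δ → V := Sum.elim (fun i => ((e1.symm i) : V)) (fun i => ((e2.symm i) : V))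
  have hgf : ∀ x, g (f x) = x := by
    intro x
    by_cases h : x ∈ G.neighborFinset u
    · simp [f, g, SimpleGraph.mem_neighborFinset] at h ⊢; simp [h]
    · simp [f, g, SimpleGraph.mem_neighborFinset] at h ⊢; simp [h]
  have hfg : ∀ s, f (g s) = s := by
    intro s
    rcases s with i | i
    · have h : ((e1.symm i : ↥(G.neighborFinset u)) : V) ∈ G.neighborFinset u :=
        (e1.symm i).2
      rw [SimpleGraph.mem_neighborFinset] at h
      simp [f, g, h]
    · have h2 : ((e2.symm i : ↥(G.neighborFinset v)) : V) ∈ G.neighborFinset v :=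
        (e2.symm i).2
      have h : ¬ ((e2.symm i : ↥(G.neighborFinset v)) : V) ∈ G.neighborFinset u :=
        fun h => hdisj _ h h2
      rw [SimpleGraph.mem_neighborFinset] at h
      simp [f, g, h]
  have key : ∀ a b : V, (completeBipartiteGraph (Fin Δ) (Fin Δ)).Adj (f a) (f b) ↔ G.Adj a b := by
    intro a b
    by_cases ha : a ∈ G.neighborFinset u <;> by_cases hb : b ∈ G.neighborFinset u
    · simp only [f, dif_pos ha, dif_pos hb, completeBipartiteGraph_adj]
      simp [hnoU a ha b hb]
    · have hb' : b ∈ G.neighborFinset v := (hcover b).resolve_left hb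
      simp only [f, dif_pos ha, dif_neg hb, completeBipartiteGraph_adj]
      simp [hadj a ha b hb']
    · have ha' : a ∈ G.neighborFinset v := (hcover a).resolve_left ha
      simp only [f, dif_neg ha, dif_pos hb, completeBipartiteGraph_adj]
      simp [(hadj b hb a ha').symm]
    · have ha' : a ∈ G.neighborFinset v := (hcover a).resolve_left ha
      have hb' : b ∈ G.neighborFinset v := (hcover b).resolve_left hb
      simp only [f, dif_neg ha, dif_neg hb, completeBipartiteGraph_adj]
      simp [hnoV a ha' b hb']
  exact ⟨⟨⟨f, g, hgf, hfg⟩, key _ _⟩⟩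

lemma semistrong_of_subsingleton (G : SimpleGraph V) (M : Set (Sym2 V))
    (hM : M ⊆ G.edgeSet) (h : M.Subsingleton) : IsSemistrongMatching G M := by
  refine ⟨hM, ?_⟩
  intro e he
  have hMe : M = {e} := by
    ext f; constructor
    · intro hf; exact h hf he
    · rintro rfl; exact he
  subst hMe
  induction e with
  | _ p q =>
    have hpq : G.Adj p q := hM rfl
    refine ⟨p, Sym2.mem_mk_left _ _, q, ⟨⟨s(p,q), rfl, Sym2.mem_mk_right _ _⟩, hpq⟩, ?_⟩
    rintro w ⟨⟨f, rfl, hwf⟩, hadj⟩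
    rcases Sym2.mem_iff.1 hwf with rfl | rfl
    · exact absurd hadj G.irrefl
    · rfl

lemma semistrong_pair (G : SimpleGraph V) (u u' v v' : V)
    (h1 : G.Adj u u') (h2 : G.Adj v v')
    (n1 : ¬ G.Adj u' v) (n2 : ¬ G.Adj u' v') (n3 : ¬ G.Adj v' u) :
    IsSemistrongMatching G {s(u,u'), s(v,v')} := by
  have hvert : edgeVerts {s(u,u'), s(v,v')} = {u, u', v, v'} := by
    ext x
    simp only [edgeVerts, Set.mem_setOf_eq, Set.mem_insert_iff, Set.mem_singleton_iff]
    constructor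
    · rintro ⟨e, (rfl | rfl), hx⟩ <;> rcases Sym2.mem_iff.1 hx with rfl | rfl <;> tauto
    · rintro (rfl | rfl | rfl | rfl)
      · exact ⟨s(x,u'), Or.inl rfl, Sym2.mem_mk_left _ _⟩
      · exact ⟨s(u,x), Or.inl rfl, Sym2.mem_mk_right _ _⟩
      · exact ⟨s(x,v'), Or.inr rfl, Sym2.mem_mk_left _ _⟩
      · exact ⟨s(v,x), Or.inr rfl, Sym2.mem_mk_right _ _⟩
  constructor
  · rintro e (rfl | rfl)
    · exact h1
    · exact h2
  · rintro e (rfl | rfl)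
    · refine ⟨u', Sym2.mem_mk_right _ _, u, ⟨?_, h1.symm⟩, ?_⟩
      · rw [hvert]; left; rfl
      · rintro w ⟨hw, hadj⟩
        rw [hvert] at hw
        rcases hw with rfl | rfl | rfl | rfl
        · rfl
        · exact absurd hadj G.irrefl
        · exact absurd hadj n1
        · exact absurd hadj n2
    · refine ⟨v', Sym2.mem_mk_right _ _, v, ⟨?_, h2.symm⟩, ?_⟩
      · rw [hvert]; right; right; left; rfl
      · rintro w ⟨hw, hadj⟩
        rw [hvert] at hw
        rcases hw with rfl | rfl | rfl | rfl
        · exact absurd hadj n3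
        · exact absurd hadj (fun h => n2 h.symm)
        · rfl
        · exact absurd hadj G.irrefl

lemma exists_pair_coloring [Fintype V] [DecidableEq V] (G : SimpleGraph V) [DecidableRel G.Adj]
    (e f : Sym2 V) (he : e ∈ G.edgeSet) (hf : f ∈ G.edgeSet) (hef : e ≠ f)
    (m : ℕ) (hm : G.edgeFinset.card ≤ m + 1) (hm0 : 0 < m) :
    ∃ c : Sym2 V → Fin m, c e = c f ∧
      ∀ x ∈ G.edgeSet, ∀ y ∈ G.edgeSet, c x = c y →
        x = y ∨ ((x = e ∨ x = f) ∧ (y = e ∨ y = f)) := by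
  classical
  set S : Finset (Sym2 V) := (G.edgeFinset.erase e).erase f with hS
  set z : Fin m := ⟨0, hm0⟩ with hz
  have hcardS : S.card ≤ m - 1 := by
    have h1 : (G.edgeFinset.erase e).card = G.edgeFinset.card - 1 :=
      Finset.card_erase_of_mem (by rwa [mem_edgeFinset])
    have h2 : f ∈ G.edgeFinset.erase e :=
      Finset.mem_erase.2 ⟨fun h => hef h.symm, by rwa [mem_edgeFinset]⟩
    have h3 : S.card = (G.edgeFinset.erase e).card - 1 := Finset.card_erase_of_mem h2
    omega
  have hcard : Fintype.card ↥S ≤ Fintype.card {i : Fin m // i ≠ z} := by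
    rw [Fintype.card_coe]
    have : Fintype.card {i : Fin m // i = z} = 1 := Fintype.card_subtype_eq z
    have h4 : Fintype.card {i : Fin m // i ≠ z} = m - 1 := by
      have := Fintype.card_subtype_compl (fun i : Fin m => i = z)
      simp only [Fintype.card_fin] at this
      rw [this, Fintype.card_subtype_eq]
    omega
  obtain ⟨ψ⟩ := Function.Embedding.nonempty_of_card_le hcard
  refine ⟨fun x => if hx : x ∈ S then (ψ ⟨x, hx⟩).1 else z, ?_, ?_⟩
  · have he' : e ∉ S := by simp [hS, Finset.mem_erase]
    have hf' : f ∉ S := by simp [hS, Finset.mem_erase]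
    simp only []
    rw [dif_neg he', dif_neg hf']
  · intro x hx y hy hc
    simp only [] at hc
    by_cases hxS : x ∈ S <;> by_cases hyS : y ∈ S
    · rw [dif_pos hxS, dif_pos hyS] at hc
      left
      have := ψ.injective (Subtype.ext hc)
      exact congrArg Subtype.val this
    · rw [dif_pos hxS, dif_neg hyS] at hc
      exact absurd hc (ψ ⟨x, hxS⟩).2
    · rw [dif_neg hxS, dif_pos hyS] at hc
      exact absurd hc.symm (ψ ⟨y, hyS⟩).2
    · right
      have hx' : x ∈ G.edgeFinset := by rwa [mem_edgeFinset]
      have hy' : y ∈ G.edgeFinset := by rwa [mem_edgeFinset]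
      constructor
      · by_contra h
        push_neg at h
        exact hxS (Finset.mem_erase.2 ⟨h.2, Finset.mem_erase.2 ⟨h.1, hx'⟩⟩)
      · by_contra h
        push_neg at h
        exact hyS (Finset.mem_erase.2 ⟨h.2, Finset.mem_erase.2 ⟨h.1, hy'⟩⟩)

/-- Let `Δ ≥ 3` and let `G ∈ 𝒢_Δ` (a connected `Δ`-regular graph on `2Δ` vertices with an edge
`uv` such that `N(u) ∪ N(v) = V(G)`), not isomorphic to `K_{Δ,Δ}`. Then there are
`u' ∈ N(u) \ {v}` and `v' ∈ N(v) \ {u}` with `u'v' ∉ E(G)`; consequently `uu'` and `vv'` do not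
lie on a common 4-cycle, and `χ'_ss(G) ≤ Δ² − 1` and `χ'_{(0,1)}(G) ≤ Δ² − 1`. -/
theorem calG_ssIndex [Fintype V] [DecidableEq V] (G : SimpleGraph V) [DecidableRel G.Adj]
    (Δ : ℕ) (hΔ : 3 ≤ Δ) (hconn : G.Connected) (hreg : G.IsRegularOfDegree Δ)
    (hcard : Fintype.card V = 2 * Δ)
    (u v : V) (huv : G.Adj u v) (hNuv : G.neighborSet u ∪ G.neighborSet v = Set.univ)
    (hnotK : IsEmpty (G ≃g completeBipartiteGraph (Fin Δ) (Fin Δ))) :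
    (∃ u' v', G.Adj u u' ∧ u' ≠ v ∧ G.Adj v v' ∧ v' ≠ u ∧ ¬ G.Adj u' v' ∧
      ¬ OnCommonC4 G s(u, u') s(v, v')) ∧
    ssIndex G ≤ Δ ^ 2 - 1 ∧ relIndex G ≤ Δ ^ 2 - 1 := by
  classical
  have hregc : ∀ x, (G.neighborFinset x).card = Δ := fun x => hreg x
  -- Basic structure: the neighborhoods of u and v cover V and are disjoint.
  have hcover : ∀ x, x ∈ G.neighborFinset u ∨ x ∈ G.neighborFinset v := by
    intro x
    have hx : x ∈ G.neighborSet u ∪ G.neighborSet v := by rw [hNuv]; trivial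
    simpa [SimpleGraph.mem_neighborFinset, SimpleGraph.mem_neighborSet] using hx
  have hU : G.neighborFinset u ∪ G.neighborFinset v = Finset.univ := by
    ext x
    simp only [Finset.mem_union, Finset.mem_univ, iff_true]
    exact hcover x
  have hdisjF : ∀ x, x ∈ G.neighborFinset u → x ∈ G.neighborFinset v → False := by
    have hcu := Finset.card_union_add_card_inter (G.neighborFinset u) (G.neighborFinset v)
    rw [hU, Finset.card_univ, hcard, hregc u, hregc v] at hcu
    have hint : (G.neighborFinset u ∩ G.neighborFinset v).card = 0 := by omega
    intro x hx hy
    have : x ∈ G.neighborFinset u ∩ G.neighborFinset v := Finset.mem_inter.2 ⟨hx, hy⟩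
    rw [Finset.card_eq_zero.1 hint] at this
    exact absurd this (Finset.notMem_empty x)
  have hdadj : ∀ x, G.Adj u x → G.Adj v x → False := by
    intro x hx hy
    exact hdisjF x ((SimpleGraph.mem_neighborFinset _ _ _).2 hx) ((SimpleGraph.mem_neighborFinset _ _ _).2 hy)
  -- Existence of a nonadjacent pair
  have hex : ∃ u' v', G.Adj u u' ∧ u' ≠ v ∧ G.Adj v v' ∧ v' ≠ u ∧ ¬ G.Adj u' v' := by
    by_contra hno
    push_neg at hno
    have cross : ∀ x ∈ G.neighborFinset u, ∀ y ∈ G.neighborFinset v, G.Adj x y := by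
      intro x hx y hy
      rw [SimpleGraph.mem_neighborFinset] at hx hy
      by_cases hxv : x = v
      · subst hxv
        exact hy
      · by_cases hyu : y = u
        · subst hyu
          exact hx.symm
        · exact hno x y hx hxv hy hyu
    have hnoU : ∀ x ∈ G.neighborFinset u, ∀ y ∈ G.neighborFinset u, ¬ G.Adj x y := by
      intro x hx y hy hadj
      have hsub : insert y (G.neighborFinset v) ⊆ G.neighborFinset x := by
        intro z hz
        rcases Finset.mem_insert.1 hz with rfl | hz
        · exact (SimpleGraph.mem_neighborFinset _ _ _).2 hadj
        · exact (SimpleGraph.mem_neighborFinset _ _ _).2 (cross x hx z hz)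
      have hyv : y ∉ G.neighborFinset v := fun h => hdisjF y hy h
      have hcards := Finset.card_le_card hsub
      rw [Finset.card_insert_of_notMem hyv, hregc v, hregc x] at hcards
      omega
    have hnoV : ∀ x ∈ G.neighborFinset v, ∀ y ∈ G.neighborFinset v, ¬ G.Adj x y := by
      intro x hx y hy hadj
      have hsub : insert y (G.neighborFinset u) ⊆ G.neighborFinset x := by
        intro z hz
        rcases Finset.mem_insert.1 hz with rfl | hz
        · exact (SimpleGraph.mem_neighborFinset _ _ _).2 hadj
        · exact (SimpleGraph.mem_neighborFinset _ _ _).2 (cross z hz x hx).symm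
      have hyu : y ∉ G.neighborFinset u := fun h => hdisjF y h hy
      have hcards := Finset.card_le_card hsub
      rw [Finset.card_insert_of_notMem hyu, hregc u, hregc x] at hcards
      omega
    obtain ⟨iso⟩ := iso_aux G Δ u v (hregc u) (hregc v) hcover hdisjF cross hnoU hnoV
    exact hnotK.false iso
  obtain ⟨u', v', h1, h2, h3, h4, h5⟩ := hex
  -- nonadjacency and distinctness facts
  have n1 : ¬ G.Adj u' v := fun h => hdadj u' h1 h.symm
  have n1' : ¬ G.Adj v u' := fun h => n1 h.symm
  have n2 : ¬ G.Adj u v' := fun h => hdadj v' h h3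
  have n2' : ¬ G.Adj v' u := fun h => n2 h.symm
  have n5' : ¬ G.Adj v' u' := fun h => h5 h.symm
  have huu' : u ≠ u' := h1.ne
  have hvv' : v ≠ v' := h3.ne
  have hunv : u ≠ v := huv.ne
  have hu'v' : u' ≠ v' := by
    rintro rfl
    exact hdadj u' h1 h3
  have hC4 : ¬ OnCommonC4 G s(u, u') s(v, v') := by
    rintro ⟨p, q, r, t, hpq, hqr, hrt, htp, hpr, hqt, heC, hfC⟩
    simp only [Set.mem_insert_iff, Set.mem_singleton_iff] at heC hfC
    rcases heC with h | h | h | h <;> rcases hfC with h' | h' | h' | h' <;>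
      rw [Sym2.eq_iff] at h h' <;>
      rcases h with ⟨rfl, rfl⟩ | ⟨rfl, rfl⟩ <;>
      rcases h' with ⟨h'1, h'2⟩ | ⟨h'1, h'2⟩ <;>
      subst_vars <;>
      simp_all
  -- the edges and their color
  have he : s(u, u') ∈ G.edgeSet := h1
  have hf : s(v, v') ∈ G.edgeSet := h3
  have hef : s(u, u') ≠ s(v, v') := by
    intro hcon
    rcases Sym2.eq_iff.1 hcon with ⟨h9, h10⟩ | ⟨h9, h10⟩
    · exact hunv h9
    · exact h4 h9.symm
  -- edge count
  have hecard : G.edgeFinset.card = Δ * Δ := by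
    have hsum := G.sum_degrees_eq_twice_card_edges
    have hsum2 : ∑ x, G.degree x = 2 * Δ * Δ := by
      rw [Finset.sum_congr rfl (fun x _ => hreg x), Finset.sum_const, Finset.card_univ, hcard,
        smul_eq_mul]
    rw [hsum2] at hsum
    have h2 : 2 * (Δ * Δ) = 2 * G.edgeFinset.card := by rw [← hsum]; ring
    omega
  have hΔ2 : 1 < Δ ^ 2 := by nlinarith
  obtain ⟨c, hcef, hcinj⟩ := exists_pair_coloring G s(u, u') s(v, v') he hf hef (Δ ^ 2 - 1)
    (by rw [hecard]; have : Δ ^ 2 = Δ * Δ := sq Δ; omega) (by omega)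
  have hcfe : c s(v, v') = c s(u, u') := hcef.symm
  -- the semistrong coloring
  have hss : IsSemistrongColoring G c := by
    intro i
    by_cases hie : s(u, u') ∈ G.edgeSet ∧ c s(u, u') = i
    · have hMeq : {x | x ∈ G.edgeSet ∧ c x = i} = {s(u, u'), s(v, v')} := by
        ext x
        simp only [Set.mem_setOf_eq, Set.mem_insert_iff, Set.mem_singleton_iff]
        constructor
        · rintro ⟨hxE, hxc⟩
          rcases hcinj x hxE s(u, u') he (by rw [hxc, hie.2]) with rfl | ⟨hx, _⟩
          · exact Or.inl rfl
          · exact hx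
        · rintro (rfl | rfl)
          · exact hie
          · exact ⟨hf, by rw [hcfe, hie.2]⟩
      rw [hMeq]
      exact semistrong_pair G u u' v v' h1 h3 n1 h5 n2'
    · apply semistrong_of_subsingleton
      · intro x hx
        exact hx.1
      · rintro x ⟨hxE, hxc⟩ y ⟨hyE, hyc⟩
        rcases hcinj x hxE y hyE (by rw [hxc, hyc]) with rfl | ⟨hx, hy⟩
        · rfl
        · exfalso
          rcases hx with rfl | rfl
          · exact hie ⟨hxE, hxc⟩
          · exact hie ⟨he, by rw [hcef]; exact hxc⟩
  -- the relaxed coloring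
  have hEadjef : ¬ EdgeAdj s(u, u') s(v, v') := by
    rintro ⟨-, x, hx1, hx2⟩
    rcases Sym2.mem_iff.1 hx1 with rfl | rfl <;> rcases Sym2.mem_iff.1 hx2 with h' | h'
    · exact hunv h'
    · exact h4 h'.symm
    · exact h2 h'
    · exact hu'v' h'
  have hrel : IsRelaxedColoring G c := by
    constructor
    · intro a ha b hb hadj hcab
      rcases hcinj a ha b hb hcab with rfl | ⟨hae, hbe⟩
      · exact hadj.1 rfl
      · rcases hae with rfl | rfl <;> rcases hbe with rfl | rfl
        · exact hadj.1 rfl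
        · exact hEadjef hadj
        · exact hEadjef ⟨fun h => hadj.1 h.symm, hadj.2.imp fun x hx => ⟨hx.2, hx.1⟩⟩
        · exact hadj.1 rfl
    · intro g hg x hx y hy
      obtain ⟨hxE, hxd, hxc⟩ := hx
      obtain ⟨hyE, hyd, hyc⟩ := hy
      have hxg : g ≠ x := hxd.1
      have hyg : g ≠ y := hyd.1
      have hxef : (x = s(u, u') ∨ x = s(v, v')) ∧ (g = s(u, u') ∨ g = s(v, v')) := by
        rcases hcinj x hxE g hg hxc with rfl | h
        · exact absurd rfl hxg
        · exact h
      have hyef : (y = s(u, u') ∨ y = s(v, v')) ∧ (g = s(u, u') ∨ g = s(v, v')) := by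
        rcases hcinj y hyE g hg hyc with rfl | h
        · exact absurd rfl hyg
        · exact h
      rcases hxef.2 with rfl | rfl
      · rcases hxef.1 with rfl | rfl
        · exact absurd rfl hxg
        · rcases hyef.1 with rfl | rfl
          · exact absurd rfl hyg
          · rfl
      · rcases hxef.1 with rfl | rfl
        · rcases hyef.1 with rfl | rfl
          · rfl
          · exact absurd rfl hyg
        · exact absurd rfl hxg
  refine ⟨⟨u', v', h1, h2, h3, h4, h5, hC4⟩, ?_, ?_⟩
  · exact Nat.sInf_le ⟨c, hss⟩
  · exact Nat.sInf_le ⟨c, hrel⟩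
end

section
/- Let φ be an edge coloring of a graph G such that every edge e receives a color different from all colors on edges in F(e) (a 'good' coloring). If no edge of G has two or more 2-neighbors with its own color (no 'bad edge'), then φ is simultaneously a semistrong edge coloring and a (0,1)-relaxed strong edge coloring of G. -/
open SimpleGraph

variable {V : Type*}

lemma crossPairs_finite (G : SimpleGraph V) (e f : Sym2 V) : (crossPairs G e f).Finite := by
  induction e using Sym2.ind with | _ a b =>
  induction f using Sym2.ind with | _ u v =>
  apply Set.Finite.subset
    ((((Set.finite_singleton ((b,v) : V × V)).insert (b,u)).insert (a,v)).insert (a,u))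
  rintro ⟨p1, p2⟩ ⟨h1, h2, -⟩
  simp only [Sym2.mem_iff] at h1 h2
  rcases h1 with rfl | rfl <;> rcases h2 with rfl | rfl <;> simp

lemma aux_dist2 (G : SimpleGraph V) {a b x : V} (hax : G.Adj a x)
    (hxb : x ≠ b) {f : Sym2 V} (hf : f ∈ G.edgeSet) (hxf : x ∈ f)
    (hnadj : ¬ EdgeAdj s(a,b) f) :
    f ∈ Dist2Set G s(a,b) ∧ (a, x) ∈ crossPairs G s(a,b) f := by
  have hxe : x ∉ s(a,b) := by
    rw [Sym2.mem_iff]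
    rintro (rfl | rfl)
    · exact hax.ne' rfl
    · exact hxb rfl
  have hef : s(a,b) ≠ f := fun h => hxe (h ▸ hxf)
  have haf : a ∉ f := fun h => hnadj ⟨hef, a, Sym2.mem_mk_left a b, h⟩
  refine ⟨⟨hf, hef, hnadj, s(a,x), hax, ⟨?_, a, Sym2.mem_mk_left a b, Sym2.mem_mk_left a x⟩,
    ⟨?_, x, hxf, Sym2.mem_mk_right a x⟩⟩, Sym2.mem_mk_left a b, hxf, hax⟩
  · exact fun h => hxe (h ▸ Sym2.mem_mk_right a x)
  · exact fun h => haf (h ▸ Sym2.mem_mk_left a x)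

/-- If `c` is a good coloring (every edge gets a color different from all edges of `F(e)`) and
no edge has two or more same-colored 2-neighbors, then `c` is simultaneously a semistrong edge
coloring and a (0,1)-relaxed strong edge coloring. -/
theorem good_no_bad_is_semistrong_and_relaxed (G : SimpleGraph V) {k : ℕ}
    (c : Sym2 V → Fin k)
    (hgood : ∀ e ∈ G.edgeSet, ∀ f ∈ Fset G e, c f ≠ c e)
    (hnobad : ∀ e ∈ G.edgeSet, {f | f ∈ Dist2Set G e ∧ c f = c e}.Subsingleton) :
    IsSemistrongColoring G c ∧ IsRelaxedColoring G c := by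
  have hna : ∀ e ∈ G.edgeSet, ∀ f ∈ G.edgeSet, EdgeAdj e f → c e ≠ c f := by
    intro e he f hf hadj heq
    exact hgood e he f (Or.inl ⟨hf, hadj⟩) heq.symm
  constructor
  · -- semistrong
    intro i
    refine ⟨fun e he => he.1, ?_⟩
    rintro e ⟨he, hci⟩
    set M : Set (Sym2 V) := {e | e ∈ G.edgeSet ∧ c e = i} with hM
    induction e using Sym2.ind with | _ a b =>
    have hab : G.Adj a b := he
    -- key claim: not both endpoints have an extra neighbor in edgeVerts M
    have key : ∀ x y : V, x ∈ edgeVerts M → G.Adj a x → x ≠ b →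
        y ∈ edgeVerts M → G.Adj b y → y ≠ a → False := by
      intro x y hxV hax hxb hyV hby hya
      obtain ⟨f, hfM, hxf⟩ := hxV
      obtain ⟨f', hf'M, hyf'⟩ := hyV
      have hcf : c f = c s(a,b) := hfM.2.trans hci.symm
      have hcf' : c f' = c s(a,b) := hf'M.2.trans hci.symm
      have hnadj : ¬ EdgeAdj s(a,b) f := fun h =>
        hgood s(a,b) he f (Or.inl ⟨hfM.1, h⟩) hcf
      have hnadj' : ¬ EdgeAdj s(a,b) f' := fun h =>
        hgood s(a,b) he f' (Or.inl ⟨hf'M.1, h⟩) hcf'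
      obtain ⟨hd2, hcp⟩ := aux_dist2 G hax hxb hfM.1 hxf hnadj
      have hba : s(b,a) = s(a,b) := Sym2.eq_swap
      have hnadj'' : ¬ EdgeAdj s(b,a) f' := hba ▸ hnadj'
      obtain ⟨hd2', hcp'⟩ := aux_dist2 G hby hya hf'M.1 hyf' hnadj''
      rw [hba] at hd2' hcp'
      have hff' : f = f' :=
        hnobad s(a,b) he ⟨hd2, hcf⟩ ⟨hd2', hcf'⟩
      subst hff'
      have h2 : 2 ≤ (crossPairs G s(a,b) f).ncard := by
        have := (Set.one_lt_ncard (crossPairs_finite G s(a,b) f)).mpr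
          ⟨(a,x), hcp, (b,y), hcp', fun h => hab.ne (congrArg Prod.fst h)⟩
        omega
      exact hgood s(a,b) he f (Or.inr ⟨hd2, h2⟩) hcf
    have hbV : b ∈ edgeVerts M := ⟨s(a,b), ⟨he, hci⟩, Sym2.mem_mk_right a b⟩
    have haV : a ∈ edgeVerts M := ⟨s(a,b), ⟨he, hci⟩, Sym2.mem_mk_left a b⟩
    by_cases hA : ∃ x, x ∈ edgeVerts M ∧ G.Adj a x ∧ x ≠ b
    · refine ⟨b, Sym2.mem_mk_right a b, a, ⟨haV, hab.symm⟩, ?_⟩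
      rintro y ⟨hyV, hby⟩
      by_contra hya
      obtain ⟨x, hxV, hax, hxb⟩ := hA
      exact key x y hxV hax hxb hyV hby hya
    · refine ⟨a, Sym2.mem_mk_left a b, b, ⟨hbV, hab⟩, ?_⟩
      rintro x ⟨hxV, hax⟩
      by_contra hxb
      exact hA ⟨x, hxV, hax, hxb⟩
  · -- relaxed
    refine ⟨hna, fun e he => Set.Subsingleton.anti (hnobad e he) ?_⟩
    rintro f ⟨hfE, hd2, hcf⟩
    exact ⟨⟨hfE, hd2⟩, hcf⟩
end
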